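/- arXiv:1003.2010 — 5 statements merged into one kernel-verified Lean document; each statement's English description precedes it below -/
import Mathlib

section
/- Fix an integer n ≥ 1 and let μ_n be the limiting spectral measure, i.e., the unique probability measure on ℝ whose k-th moment is M_{k,n} = lim_{N→∞} M_{k,n;N} for every k ≥ 1. Then μ_n has unbounded support: for every B > 0, μ_n(ℝ \ [−B, B]) > 0. -/
open MeasureTheory Filter Finset

noncomputable section

/-- The link function `ψ_N(i,j) = min(r, P-1-r)` where `P = N/2^n` and
`r` is the residue of `|i-j|` modulo `P`. -/
def psi (n N i j : ℕ) : ℕ :=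
  min ((((i : ℤ) - (j : ℤ)).natAbs) % (N / 2 ^ n))
    (N / 2 ^ n - 1 - (((i : ℤ) - (j : ℤ)).natAbs) % (N / 2 ^ n))

/-- Cyclic successor on `Fin k`. -/
def cycSucc {k : ℕ} (j : Fin k) : Fin k := ⟨(j.val + 1) % k, Nat.mod_lt _ j.pos⟩

/-- The value of the link function on the `j`-th edge of the cyclic tuple `i`,
where indices in `{1,…,N}` are represented by `Fin N` shifted by one. -/
def edgePsi (n N : ℕ) {k : ℕ} (i : Fin k → Fin N) (j : Fin k) : ℕ :=
  psi n N ((i j : ℕ) + 1) ((i (cycSucc j) : ℕ) + 1)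

/-- The average `k`-th moment
`M_{k,n;N} = N^{-(k/2+1)} ∑_{i₁,…,i_k} E[b_{ψ(i₁,i₂)} ⋯ b_{ψ(i_k,i₁)}]`,
with expectation over `b ∈ ℝ^ℕ` w.r.t. the measure `μ`. -/
def avgMoment (μ : Measure (ℕ → ℝ)) (n N k : ℕ) : ℝ :=
  ((N : ℝ) ^ ((k : ℝ) / 2 + 1))⁻¹ *
    ∑ i : Fin k → Fin N, ∫ b : ℕ → ℝ, ∏ j : Fin k, b (edgePsi n N i j) ∂μ

/-- The `N×N` real symmetric Toeplitz matrix whose first row is `2^n` copies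
of a palindrome, built from the sequence `b`. -/
def toepMat (n N : ℕ) (b : ℕ → ℝ) : Matrix (Fin N) (Fin N) ℝ :=
  Matrix.of fun i j => b (psi n N ((i : ℕ) + 1) ((j : ℕ) + 1))

/-- The empirical `m`-th moment `X_{m,n;N}(b) = N^{-(m/2+1)} Tr(A_N(b)^m)`. -/
def empMoment (n N m : ℕ) (b : ℕ → ℝ) : ℝ :=
  ((N : ℝ) ^ ((m : ℝ) / 2 + 1))⁻¹ * Matrix.trace (toepMat n N b ^ m)

/-!
A probability measure carried by `[-B, B]` has `∫ x ^ (2k) ≤ B ^ (2k)`, so it suffices to show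
that the even moments `M_{2k,n}` grow like `k! / C ^ k`.

Expand `M_{2k,n;N}` as a sum over closed walks `i` of length `2k` in `{1, …, N}`, labelling the
edge `(i_j, i_{j+1})` by `ψ_N(i_j, i_{j+1})`. By independence the summand vanishes when some label
occurs once, equals `1` when every label occurs exactly twice, and is bounded otherwise. In the
last case there are fewer than `k` distinct labels, and since `ψ_N(a, ·)` takes each value at most
`2^(n+2)` times, a walk is determined by its start, the pattern of first occurrences of its labels,
its `< k` free steps, and bounded choices elsewhere: there are `O(N^k)` such walks.

For `N = 2^(n+1) u`, so that `P = 2u`, walks whose labels come in pairs are built from `k` distinct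
labels `v_a < u`, a permutation `σ` and a start `w`: step by `+v_a` on the first `k` edges and by
`-v_{σ a}` on the last `k`, modulo `2u - 1` inside a window of length `2u - 1 < P`, where a
displacement `±v (mod 2u - 1)` always has `ψ`-value `v`. There are
`k! (u-1)_k (2u-1) ≥ k! u^(k+1) / 2^k` of them, whence `M_{2k,n} ≥ k! / (2^k (2^(n+1))^(k+1))`.
-/

open scoped Nat Topology

def IsIidProduct {ι : Type*} (p : Measure ℝ) (μprod : Measure (ι → ℝ)) : Prop :=
  ∀ (s : Finset ι) (A : ι → Set ℝ), (∀ i, MeasurableSet (A i)) →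
    μprod {b | ∀ i ∈ s, b i ∈ A i} = ∏ i ∈ s, p (A i)

theorem abs_integral_pow_le {p : Measure ℝ} [IsProbabilityMeasure p]
    (hfin : ∀ k : ℕ, Integrable (fun x => x ^ k) p) {j m : ℕ} (hjm : j ≤ m) :
    |∫ x, x ^ j ∂p| ≤ 1 + ∫ x, |x| ^ m ∂p := by
  have hpoint : ∀ x : ℝ, |x| ^ j ≤ 1 + |x| ^ m := fun x => by
    rcases le_total |x| 1 with h | h
    · linarith [pow_le_one₀ (n := j) (abs_nonneg x) h, pow_nonneg (abs_nonneg x) m]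
    · linarith [pow_le_pow_right₀ h hjm]
  have hint : Integrable (fun x : ℝ => |x| ^ m) p := by simpa using (hfin m).norm
  calc |∫ x, x ^ j ∂p| ≤ ∫ x, |x| ^ j ∂p := by
        simpa using norm_integral_le_integral_norm (μ := p) fun x : ℝ => x ^ j
    _ ≤ ∫ x, (1 + |x| ^ m) ∂p :=
        integral_mono (by simpa using (hfin j).norm) ((integrable_const 1).add hint) hpoint
    _ = 1 + ∫ x, |x| ^ m ∂p := by simp [integral_add (integrable_const 1) hint]

theorem two_mul_card_image_lt {α : Type*} [DecidableEq α] {m : ℕ} (e : Fin m → α)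
    (hsingle : ∀ j, #{j' | e j' = e j} ≠ 1) (hpair : ∃ j, #{j' | e j' = e j} ≠ 2) :
    2 * #(univ.image e) < m := by
  have hmult : ∀ j, 2 ≤ #{j' | e j' = e j} := fun j => by
    have : 0 < #{j' | e j' = e j} := card_pos.mpr ⟨j, by simp⟩
    have := hsingle j
    omega
  obtain ⟨j, hj⟩ := hpair
  calc 2 * #(univ.image e) = ∑ _v ∈ univ.image e, 2 := by rw [sum_const, smul_eq_mul, mul_comm]
    _ < ∑ v ∈ univ.image e, #{j | e j = v} := by
        refine sum_lt_sum (fun v hv => ?_) ⟨e j, mem_image_of_mem e (mem_univ j), ?_⟩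
        · obtain ⟨j, -, rfl⟩ := mem_image.mp hv
          exact hmult j
        · have := hmult j
          omega
    _ = m := by rw [← card_eq_sum_card_image, card_univ, Fintype.card_fin]

namespace IsIidProduct

variable {ι : Type*} {p : Measure ℝ} {μprod : Measure (ι → ℝ)}

theorem map_restrict [SigmaFinite p] (hprod : IsIidProduct p μprod) (s : Finset ι) :
    μprod.map (fun b (v : s) => b v) = Measure.pi fun _ : s => p := by
  classical
  have hmeas : Measurable fun (b : ι → ℝ) (v : s) => b v :=
    measurable_pi_lambda _ fun v => measurable_pi_apply (v : ι)
  refine (Measure.pi_eq fun A hA => ?_).symm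
  let A' : ι → Set ℝ := fun i => if h : i ∈ s then A ⟨i, h⟩ else Set.univ
  have hA' : ∀ i, MeasurableSet (A' i) := fun i => by
    by_cases h : i ∈ s <;> simp [A', h, hA]
  have hpre : (fun (b : ι → ℝ) (v : s) => b v) ⁻¹' Set.univ.pi A
      = {b | ∀ i ∈ s, b i ∈ A' i} := by
    ext b
    simp only [Set.mem_preimage, Set.mem_univ_pi, Subtype.forall, Set.mem_ofPred_eq]
    exact forall₂_congr fun i hi => by simp [A', hi]
  rw [Measure.map_apply hmeas (.univ_pi hA), hpre, hprod s A' hA', ← prod_attach s]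
  exact prod_congr rfl fun i _ => by simp [A']

theorem integral_prod_apply [SigmaFinite p] [DecidableEq ι] (hprod : IsIidProduct p μprod)
    {κ : Type*} [Fintype κ] (e : κ → ι) :
    ∫ b, ∏ j, b (e j) ∂μprod = ∏ v ∈ univ.image e, ∫ x, x ^ #{j | e j = v} ∂p := by
  set s := univ.image e
  have hmeas : Measurable fun (b : ι → ℝ) (v : s) => b v :=
    measurable_pi_lambda _ fun v => measurable_pi_apply (v : ι)
  have hgroup (b : ι → ℝ) : ∏ j, b (e j) = ∏ v : s, (b v) ^ #{j | e j = v} := by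
    rw [prod_comp (fun v => b v) e, univ_eq_attach, prod_attach s fun v => b v ^ #{j | e j = v}]
  simp_rw [hgroup]
  have hmeas' : Measurable fun y : s → ℝ => ∏ v, y v ^ #{j | e j = (v : ι)} :=
    Finset.measurable_prod _ fun v _ => (measurable_pi_apply v).pow_const _
  rw [← integral_map hmeas.aemeasurable hmeas'.aestronglyMeasurable, hprod.map_restrict,
    integral_fintype_prod_eq_prod (fun (v : s) (x : ℝ) => x ^ #{j | e j = v}), univ_eq_attach,
    prod_attach s fun v => ∫ x, x ^ #{j | e j = v} ∂p]

theorem integral_prod_apply_eq_zero [SigmaFinite p] [DecidableEq ι] (hprod : IsIidProduct p μprod)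
    (hmean : ∫ x, x ∂p = 0) {m : ℕ} (e : Fin m → ι) (h : ∃ j, #{j' | e j' = e j} = 1) :
    ∫ b, ∏ j, b (e j) ∂μprod = 0 := by
  obtain ⟨j, hj⟩ := h
  rw [hprod.integral_prod_apply]
  exact prod_eq_zero (mem_image_of_mem e (mem_univ j)) (by simpa [hj] using hmean)

theorem integral_prod_apply_eq_one [SigmaFinite p] [DecidableEq ι] (hprod : IsIidProduct p μprod)
    (hvar : ∫ x, x ^ 2 ∂p = 1) {m : ℕ} (e : Fin m → ι)
    (h : ∀ j, #{j' | e j' = e j} = 2) :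
    ∫ b, ∏ j, b (e j) ∂μprod = 1 := by
  rw [hprod.integral_prod_apply]
  refine prod_eq_one fun v hv => ?_
  obtain ⟨j, -, rfl⟩ := mem_image.mp hv
  rw [h j, hvar]

theorem abs_integral_prod_apply_le [DecidableEq ι] [IsProbabilityMeasure p]
    (hprod : IsIidProduct p μprod)
    (hfin : ∀ k : ℕ, Integrable (fun x => x ^ k) p) {m : ℕ} (e : Fin m → ι) :
    |∫ b, ∏ j, b (e j) ∂μprod| ≤ (1 + ∫ x, |x| ^ m ∂p) ^ m := by
  have hD : 1 ≤ 1 + ∫ x, |x| ^ m ∂p := by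
    linarith [integral_nonneg (μ := p) (f := fun x : ℝ => |x| ^ m) fun x => by positivity]
  rw [hprod.integral_prod_apply, abs_prod]
  calc ∏ v ∈ univ.image e, |∫ x, x ^ #{j | e j = v} ∂p|
      ≤ ∏ _v ∈ univ.image e, (1 + ∫ x, |x| ^ m ∂p) :=
        prod_le_prod (fun _ _ => abs_nonneg _) fun v _ =>
          abs_integral_pow_le hfin ((card_filter_le _ _).trans (by simp))
    _ ≤ (1 + ∫ x, |x| ^ m ∂p) ^ m := by
        rw [prod_const]
        exact pow_le_pow_right₀ hD (card_image_le.trans (by simp))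

theorem sum_integral_prod_ge [DecidableEq ι] [IsProbabilityMeasure p]
    (hprod : IsIidProduct p μprod)
    (hmean : ∫ x, x ∂p = 0) (hvar : ∫ x, x ^ 2 ∂p = 1)
    (hfin : ∀ k : ℕ, Integrable (fun x => x ^ k) p)
    {T : Type*} [Fintype T] {m : ℕ} (W : T → Fin m → ι) :
    (#{t | ∀ j, #{j' | W t j' = W t j} = 2} : ℝ)
        - (1 + ∫ x, |x| ^ m ∂p) ^ m * #{t | 2 * #(univ.image (W t)) < m}
      ≤ ∑ t, ∫ b, ∏ j, b (W t j) ∂μprod := by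
  set D := (1 + ∫ x, |x| ^ m ∂p) ^ m
  have hD : 0 ≤ D := by
    have := integral_nonneg (μ := p) (f := fun x : ℝ => |x| ^ m) fun x => by positivity
    positivity
  have hterm : ∀ t, (if ∀ j, #{j' | W t j' = W t j} = 2 then (1 : ℝ) else 0)
      - D * (if 2 * #(univ.image (W t)) < m then 1 else 0)
      ≤ ∫ b, ∏ j, b (W t j) ∂μprod := by
    intro t
    by_cases hpair : ∀ j, #{j' | W t j' = W t j} = 2
    · rw [if_pos hpair, hprod.integral_prod_apply_eq_one hvar _ hpair]
      split_ifs <;> linarith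
    by_cases hsingle : ∃ j, #{j' | W t j' = W t j} = 1
    · rw [if_neg hpair, hprod.integral_prod_apply_eq_zero hmean _ hsingle]
      split_ifs <;> linarith
    push Not at hpair hsingle
    rw [if_neg (not_forall.mpr hpair), if_pos (two_mul_card_image_lt _ hsingle hpair)]
    linarith [neg_abs_le (∫ b, ∏ j, b (W t j) ∂μprod),
      hprod.abs_integral_prod_apply_le hfin (W t)]
  calc _ = ∑ t, ((if ∀ j, #{j' | W t j' = W t j} = 2 then (1 : ℝ) else 0)
        - D * (if 2 * #(univ.image (W t)) < m then 1 else 0)) := by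
          rw [sum_sub_distrib, ← mul_sum, sum_boole, sum_boole]
    _ ≤ _ := sum_le_sum fun t _ => hterm t

end IsIidProduct

theorem cycSucc_val_of_lt {K : ℕ} {j : Fin K} (h : j.val + 1 < K) : (cycSucc j).val = j.val + 1 :=
  Nat.mod_eq_of_lt h

section ClosedWalk

variable {α β : Type*} [DecidableEq α] {K : ℕ}

def firstOccurrence (e : Fin K → α) (j : Fin K) : Fin K :=
  ({j' | e j' = e j} : Finset (Fin K)).min' ⟨j, by simp⟩

theorem firstOccurrence_le (e : Fin K → α) (j : Fin K) : firstOccurrence e j ≤ j :=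
  min'_le _ _ (by simp)

theorem apply_firstOccurrence (e : Fin K → α) (j : Fin K) : e (firstOccurrence e j) = e j :=
  (mem_filter.mp (min'_mem ({j' | e j' = e j} : Finset (Fin K)) _)).2

theorem firstOccurrence_eq_of_apply_eq (e : Fin K → α) {j₁ j₂ : Fin K}
    (h : e j₁ = e j₂) : firstOccurrence e j₁ = firstOccurrence e j₂ := by
  simp only [firstOccurrence, h]

theorem card_fixed_firstOccurrence (e : Fin K → α) :
    #{j | firstOccurrence e j = j} = #(univ.image e) := by
  refine card_bij (fun j _ => e j) (fun j _ => mem_image_of_mem e (mem_univ j)) ?_ ?_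
  · intro j₁ h₁ j₂ h₂ h
    simp only [mem_filter, mem_univ, true_and] at h₁ h₂
    rw [← h₁, ← h₂, firstOccurrence_eq_of_apply_eq e h]
  · intro v hv
    obtain ⟨j, -, rfl⟩ := mem_image.mp hv
    refine ⟨firstOccurrence e j, ?_, apply_firstOccurrence e j⟩
    simpa using firstOccurrence_eq_of_apply_eq e (apply_firstOccurrence e j)

section IndexIn

variable {β : Type*} [DecidableEq β]

def indexIn (S : Finset β) (x : β) : ℕ := if hx : x ∈ S then S.equivFin ⟨x, hx⟩ else 0

theorem indexIn_lt_card {S : Finset β} {x : β} (hx : x ∈ S) : indexIn S x < #S := by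
  simp [indexIn, hx]

theorem indexIn_injOn (S : Finset β) : Set.InjOn (indexIn S) S := by
  intro x hx y hy h
  simp only [indexIn, dif_pos (mem_coe.mp hx), dif_pos (mem_coe.mp hy), Fin.val_inj] at h
  simpa using S.equivFin.injective h

end IndexIn

variable [Fintype β] (ℓ : β → β → α)

def walkLabels (i : Fin K → β) (j : Fin K) : α := ℓ (i j) (i (cycSucc j))

/-- Where the walk may go after `i j`, given that edge `j` repeats the label of edge `f j`. -/
def successorSet (f : Fin K → Fin K) (i : Fin K → β) (j : Fin K) : Finset β :=
  if f j = j then univ else ({b | ℓ (i j) b = walkLabels ℓ i (f j)} : Finset β)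

theorem mem_successorSet {i : Fin K → β} (j : Fin K) :
    i (cycSucc j) ∈ successorSet ℓ (firstOccurrence (walkLabels ℓ i)) i j := by
  unfold successorSet
  split_ifs
  · exact mem_univ _
  · exact mem_filter.mpr ⟨mem_univ _, (apply_firstOccurrence (walkLabels ℓ i) j).symm⟩

theorem card_successorSet_le {c : ℕ} (hfiber : ∀ a v, #{b | ℓ a b = v} ≤ c)
    (f : Fin K → Fin K) (i : Fin K → β) (j : Fin K) :
    #(successorSet ℓ f i j) ≤ if f j = j then Fintype.card β else c := by
  unfold successorSet
  split_ifs
  · exact (card_univ).le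
  · exact hfiber _ _

theorem successorSet_congr {f : Fin K → Fin K} (hf : ∀ j, f j ≤ j) {i₁ i₂ : Fin K → β}
    {j : Fin K} (hagree : ∀ j' ≤ j, i₁ j' = i₂ j') :
    successorSet ℓ f i₁ j = successorSet ℓ f i₂ j := by
  unfold successorSet walkLabels
  split_ifs with hfix
  · rfl
  have hlt : (f j).val < j.val := lt_of_le_of_ne (hf j) fun h => hfix (Fin.ext h)
  have hsucc : cycSucc (f j) ≤ j := by
    rw [Fin.le_def, cycSucc_val_of_lt (by omega)]
    omega
  rw [hagree j le_rfl, hagree (f j) (hf j), hagree _ hsucc]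

def walkCode [DecidableEq β] (hK : 0 < K) (f : Fin K → Fin K) (i : Fin K → β) :
    β × (Fin K → ℕ) :=
  (i ⟨0, hK⟩, fun j => indexIn (successorSet ℓ f i j) (i (cycSucc j)))

/- `successorSet ℓ f i j` only involves `i` at indices `≤ j`, so a walk is rebuilt from its code
one step at a time. -/
theorem walkCode_injOn [DecidableEq β] (hK : 0 < K) (f : Fin K → Fin K) :
    Set.InjOn (walkCode ℓ hK f) {i | firstOccurrence (walkLabels ℓ i) = f} := by
  rintro i₁ (h₁ : _ = f) i₂ (h₂ : _ = f) hcode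
  have hf : ∀ j, f j ≤ j := fun j => h₁ ▸ firstOccurrence_le _ j
  have hprefix : ∀ m, ∀ j : Fin K, j.val ≤ m → i₁ j = i₂ j := by
    intro m
    induction m with
    | zero =>
      intro j hj
      obtain rfl : j = ⟨0, hK⟩ := Fin.ext (Nat.le_zero.mp hj)
      exact congrArg Prod.fst hcode
    | succ m ih =>
      intro j' hj'
      rcases Nat.lt_or_eq_of_le hj' with hlt | hj'
      · exact ih j' (by omega)
      obtain ⟨j, hjm⟩ : ∃ j : Fin K, j.val = m := ⟨⟨m, by omega⟩, rfl⟩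
      have hsucc : cycSucc j = j' := Fin.ext (by rw [cycSucc_val_of_lt (by omega)]; omega)
      have hS := successorSet_congr ℓ hf (j := j) fun j'' hj'' => ih j'' (hjm ▸ hj'')
      have hidx : indexIn (successorSet ℓ f i₁ j) (i₁ (cycSucc j))
          = indexIn (successorSet ℓ f i₂ j) (i₂ (cycSucc j)) :=
        congrFun (congrArg Prod.snd hcode) j
      rw [hS] at hidx
      rw [← hsucc]
      refine indexIn_injOn _ ?_ ?_ hidx
      · rw [← hS, ← h₁]
        exact mem_successorSet ℓ j
      · rw [← h₂]
        exact mem_successorSet ℓ j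
  exact funext fun j => hprefix j j le_rfl

theorem card_walks_with_pattern_le (hK : 0 < K) {c : ℕ}
    (hfiber : ∀ a v, #{b | ℓ a b = v} ≤ c) {f : Fin K → Fin K} {i₀ : Fin K → β}
    (hi₀ : firstOccurrence (walkLabels ℓ i₀) = f) :
    #{i | firstOccurrence (walkLabels ℓ i) = f}
      ≤ Fintype.card β ^ (#(univ.image (walkLabels ℓ i₀)) + 1) * c ^ K := by
  classical
  set a := i₀ ⟨0, hK⟩
  have hc : 1 ≤ c := (card_pos.mpr ⟨a, by simp⟩).trans_le (hfiber a (ℓ a a))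
  have hfixed : #{j | f j = j} = #(univ.image (walkLabels ℓ i₀)) := by
    rw [← hi₀, card_fixed_firstOccurrence]
  calc #{i | firstOccurrence (walkLabels ℓ i) = f}
      ≤ #(univ ×ˢ Fintype.piFinset fun j =>
          range (if f j = j then Fintype.card β else c)) := by
        refine card_le_card_of_injOn (walkCode ℓ hK f) ?_ (by simpa using walkCode_injOn ℓ hK f)
        intro i hi
        simp only [coe_filter, mem_univ, true_and, Set.mem_ofPred_eq] at hi
        simp only [walkCode, coe_product, coe_univ, Set.mem_prod, Set.mem_univ, true_and,
          Fintype.coe_piFinset, Set.mem_pi, mem_coe, mem_range]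
        intro j _
        subst hi
        exact (indexIn_lt_card (mem_successorSet ℓ j)).trans_le
          (card_successorSet_le ℓ hfiber _ _ j)
    _ = Fintype.card β * (Fintype.card β ^ #{j | f j = j} * c ^ #{j | ¬f j = j}) := by
        rw [card_product, Fintype.card_piFinset, card_univ]
        simp only [card_range]
        rw [prod_ite, prod_const, prod_const]
    _ ≤ Fintype.card β ^ (#(univ.image (walkLabels ℓ i₀)) + 1) * c ^ K := by
        rw [hfixed, ← mul_assoc, ← pow_succ']
        exact Nat.mul_le_mul_left _ (Nat.pow_le_pow_right hc ((card_filter_le _ _).trans (by simp)))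

theorem card_walks_card_image_le (hK : 0 < K) {c : ℕ} (hfiber : ∀ a v, #{b | ℓ a b = v} ≤ c)
    (r : ℕ) : #{i : Fin K → β | #(univ.image (walkLabels ℓ i)) ≤ r}
      ≤ K ^ K * (Fintype.card β ^ (r + 1) * c ^ K) := by
  set s : Finset (Fin K → β) := {i | #(univ.image (walkLabels ℓ i)) ≤ r}
  have hfibers : ∀ f ∈ (univ : Finset (Fin K → Fin K)),
      #{i ∈ s | firstOccurrence (walkLabels ℓ i) = f}
        ≤ Fintype.card β ^ (r + 1) * c ^ K := by
    intro f _
    obtain hempty | ⟨i₀, hi₀⟩ :=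
      eq_empty_or_nonempty {i ∈ s | firstOccurrence (walkLabels ℓ i) = f}
    · simp [hempty]
    simp only [s, mem_filter, mem_univ, true_and] at hi₀
    calc #{i ∈ s | firstOccurrence (walkLabels ℓ i) = f}
        ≤ #{i | firstOccurrence (walkLabels ℓ i) = f} :=
          card_le_card (filter_subset_filter _ (subset_univ s))
      _ ≤ _ := card_walks_with_pattern_le ℓ hK hfiber hi₀.2
      _ ≤ _ := by
          have : 1 ≤ Fintype.card β := Fintype.card_pos_iff.mpr ⟨i₀ ⟨0, hK⟩⟩
          gcongr
          exact hi₀.1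
  calc #s ≤ _ * #(univ : Finset (Fin K → Fin K)) :=
        card_le_mul_card_image_of_maps_to (fun _ _ => mem_univ _) _ hfibers
    _ = K ^ K * (Fintype.card β ^ (r + 1) * c ^ K) := by simp [mul_comm]

end ClosedWalk

theorem natAbs_emod_sub_emod_add {q v : ℕ} (x d : ℤ) (hd : d.natAbs = v) (hvq : v < q) :
    (x % q - (x + d) % q).natAbs = v ∨ (x % q - (x + d) % q).natAbs = q - v := by
  have hq : (0 : ℤ) < q := by omega
  obtain ⟨m, hm⟩ : (q : ℤ) ∣ (x + d) % q - (x % q + d) :=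
    ((Int.mod_modEq (x + d) q).trans ((Int.mod_modEq x q).add_right d).symm).symm.dvd
  have h₁ := Int.emod_nonneg x hq.ne'
  have h₂ := Int.emod_lt_of_pos x hq
  have h₃ := Int.emod_nonneg (x + d) hq.ne'
  have h₄ := Int.emod_lt_of_pos (x + d) hq
  have hdq : -(q : ℤ) < d ∧ d < q := by omega
  have hm₁ : m < 2 := by
    by_contra! h
    nlinarith [mul_le_mul_of_nonneg_left h hq.le]
  have hm₂ : -2 < m := by
    by_contra! h
    nlinarith [mul_le_mul_of_nonneg_left h hq.le]
  obtain rfl | rfl | rfl : m = -1 ∨ m = 0 ∨ m = 1 := by omega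
  all_goals omega

theorem psi_eq_of_natAbs_sub {n N u x y v : ℕ} (hP : N / 2 ^ n = 2 * u) (hv : v < u)
    (hxy : ((x : ℤ) - y).natAbs = v ∨ ((x : ℤ) - y).natAbs = 2 * u - 1 - v) :
    psi n N x y = v := by
  unfold psi
  rw [hP, Nat.mod_eq_of_lt (by omega)]
  omega

/- `b` is determined by the side of `a` it lies on, by the quotient of `|a - b|` by `P`, and by
which of the two residues `v`, `P - 1 - v` this distance has. -/
theorem card_psi_eq_le {n N : ℕ} (hdiv : 2 ^ n ∣ N) (a : Fin N) (v : ℕ) :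
    #{b : Fin N | psi n N (a + 1) (b + 1) = v} ≤ 2 ^ (n + 2) := by
  set P := N / 2 ^ n
  have hN : N = 2 ^ n * P := (Nat.mul_div_cancel' hdiv).symm
  have hP : 0 < P := Nat.pos_of_ne_zero fun h => by have := a.isLt; simp [hN, h] at this
  let d : Fin N → ℕ := fun b => (((a + 1 : ℕ) : ℤ) - ((b + 1 : ℕ) : ℤ)).natAbs
  have hquot : ∀ b, d b / P < 2 ^ n := fun b => by
    have := a.isLt; have := b.isLt
    rw [Nat.div_lt_iff_lt_mul hP, ← hN]
    simp only [d]
    omega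
  calc #{b : Fin N | psi n N (a + 1) (b + 1) = v}
      ≤ #(univ : Finset (Bool × Fin (2 ^ n) × Bool)) := by
        refine card_le_card_of_injOn
          (fun b => (decide (b ≤ a), ⟨d b / P, hquot b⟩, decide (d b % P = v))) (by simp) ?_
        intro b₁ h₁ b₂ h₂ h
        simp only [mem_coe, mem_filter, mem_univ, true_and] at h₁ h₂
        replace h₁ : min (d b₁ % P) (P - 1 - d b₁ % P) = v := h₁
        replace h₂ : min (d b₂ % P) (P - 1 - d b₂ % P) = v := h₂
        simp only [Prod.mk.injEq, decide_eq_decide, Fin.mk.injEq] at h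
        obtain ⟨hside, hq, hrem⟩ := h
        have hr₁ := Nat.mod_lt (d b₁) hP
        have hr₂ := Nat.mod_lt (d b₂) hP
        have hr : d b₁ % P = d b₂ % P := by
          by_cases hv : d b₁ % P = v
          · have := hrem.mp hv
            omega
          · have := mt hrem.mpr hv
            omega
        have hd : d b₁ = d b₂ := by
          rw [← Nat.div_add_mod (d b₁) P, ← Nat.div_add_mod (d b₂) P, hq, hr]
        simp only [d, Fin.le_def] at hd hside
        exact Fin.ext (by omega)
    _ = 2 ^ (n + 2) := by simp [pow_succ]; ring

section PairedWalk

variable {k u : ℕ}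

def pairLabel (σ : Equiv.Perm (Fin k)) (j : Fin (2 * k)) : Fin k :=
  if h : j.val < k then ⟨j, h⟩ else σ ⟨j - k, by omega⟩

theorem pairLabel_of_lt (σ : Equiv.Perm (Fin k)) (a : Fin k) :
    pairLabel σ ⟨a, by omega⟩ = a := by
  simp [pairLabel]

theorem pairLabel_add (σ : Equiv.Perm (Fin k)) (a : Fin k) :
    pairLabel σ ⟨k + a, by omega⟩ = σ a := by
  simp [pairLabel]

theorem card_pairLabel_eq (σ : Equiv.Perm (Fin k)) (a : Fin k) :
    #{j | pairLabel σ j = a} = 2 := by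
  have hfiber : ({j | pairLabel σ j = a} : Finset (Fin (2 * k)))
      = {⟨a, by omega⟩, ⟨k + σ.symm a, by omega⟩} := by
    ext ⟨j, hj⟩
    simp only [mem_filter, mem_univ, true_and, mem_insert, mem_singleton, pairLabel, Fin.ext_iff]
    split_ifs with h
    · rw [Fin.val_mk]
      omega
    · have := (σ.symm a).isLt
      rw [Fin.val_inj, ← Equiv.eq_symm_apply, Fin.ext_iff, Fin.val_mk]
      omega
  rw [hfiber, card_pair]
  simp only [ne_eq, Fin.mk.injEq]
  omega

def pairStep (σ : Equiv.Perm (Fin k)) (g : Fin k ↪ Fin (u - 1)) (l : ℕ) : ℤ :=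
  if h : l < 2 * k then (if l < k then 1 else -1) * ((g (pairLabel σ ⟨l, h⟩) : ℤ) + 1) else 0

theorem sum_pairStep (σ : Equiv.Perm (Fin k)) (g : Fin k ↪ Fin (u - 1)) :
    ∑ l ∈ range (2 * k), pairStep σ g l = 0 := by
  rw [two_mul, sum_range_add, sum_range, sum_range]
  have hlow : ∀ a : Fin k, pairStep σ g a = (g a : ℤ) + 1 := fun a => by
    simp [pairStep, pairLabel_of_lt, a.isLt, show (a : ℕ) < 2 * k by omega]
  have hhigh : ∀ a : Fin k, pairStep σ g (k + a) = -((g (σ a) : ℤ) + 1) := fun a => by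
    simp [pairStep, pairLabel_add, show k + (a : ℕ) < 2 * k by omega]
  simp only [hlow, hhigh, sum_neg_distrib, Equiv.sum_comp σ fun a => (g a : ℤ) + 1,
    add_neg_cancel]

def pairPartialSum (σ : Equiv.Perm (Fin k)) (g : Fin k ↪ Fin (u - 1)) (m : ℕ) : ℤ :=
  ∑ l ∈ range m, pairStep σ g l

theorem pairPartialSum_cycSucc (σ : Equiv.Perm (Fin k)) (g : Fin k ↪ Fin (u - 1))
    (j : Fin (2 * k)) :
    pairPartialSum σ g (cycSucc j) = pairPartialSum σ g j + pairStep σ g j := by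
  unfold pairPartialSum
  rw [← sum_range_succ]
  by_cases hj : j.val + 1 < 2 * k
  · rw [cycSucc_val_of_lt hj]
  · have hlast : j.val + 1 = 2 * k := by omega
    have hzero : (cycSucc j).val = 0 := by simp [cycSucc, hlast]
    rw [hzero, hlast, sum_pairStep, sum_range_zero]

def pairedWalk (n : ℕ) (σ : Equiv.Perm (Fin k)) (g : Fin k ↪ Fin (u - 1)) (w : Fin (2 * u - 1))
    (j : Fin (2 * k)) : Fin (2 ^ (n + 1) * u) :=
  ⟨((w + pairPartialSum σ g j) % (2 * u - 1 : ℕ)).toNat, by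
    have := w.isLt
    have hq : (0 : ℤ) < (2 * u - 1 : ℕ) := by omega
    have := Int.emod_lt_of_pos (w + pairPartialSum σ g j) hq
    have : 2 * u ≤ 2 ^ (n + 1) * u := Nat.mul_le_mul_right u (Nat.le_self_pow (by omega) 2)
    omega⟩

theorem edgePsi_pairedWalk (n : ℕ) (σ : Equiv.Perm (Fin k)) (g : Fin k ↪ Fin (u - 1))
    (w : Fin (2 * u - 1)) (j : Fin (2 * k)) :
    edgePsi n (2 ^ (n + 1) * u) (pairedWalk n σ g w) j = g (pairLabel σ j) + 1 := by
  have := w.isLt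
  have hq : (0 : ℤ) < (2 * u - 1 : ℕ) := by omega
  have hstep : (pairStep σ g j).natAbs = g (pairLabel σ j) + 1 := by
    simp only [pairStep, dif_pos j.isLt, Fin.eta]
    split_ifs <;> omega
  have hg := (g (pairLabel σ j)).isLt
  have hP : 2 ^ (n + 1) * u / 2 ^ n = 2 * u := by
    rw [pow_succ, mul_assoc, Nat.mul_div_cancel_left _ (by positivity)]
  refine psi_eq_of_natAbs_sub hP (by omega) ?_
  have h₁ := Int.emod_nonneg (w + pairPartialSum σ g j) hq.ne'
  have h₂ := Int.emod_nonneg (w + pairPartialSum σ g (cycSucc j)) hq.ne'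
  have := natAbs_emod_sub_emod_add (q := 2 * u - 1) (w + pairPartialSum σ g j) _ hstep
    (by omega)
  simp only [pairedWalk, pairPartialSum_cycSucc, ← add_assoc] at *
  push_cast
  omega

theorem pairedWalk_injective (n : ℕ) (hk : 0 < k) :
    Function.Injective fun x : Equiv.Perm (Fin k) × (Fin k ↪ Fin (u - 1)) × Fin (2 * u - 1) =>
      pairedWalk n x.1 x.2.1 x.2.2 := by
  rintro ⟨σ, g, w⟩ ⟨σ', g', w'⟩ h
  simp only at h
  have hlabel : ∀ j, g (pairLabel σ j) = g' (pairLabel σ' j) := fun j => by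
    have := congrArg (edgePsi n _ · j) h
    simp only [edgePsi_pairedWalk] at this
    exact Fin.ext (by omega)
  have hg : g = g' := DFunLike.ext _ _ fun a => by
    simpa [pairLabel_of_lt] using hlabel ⟨a, by omega⟩
  subst hg
  have hσ : σ = σ' := Equiv.ext fun a => g.injective <| by
    simpa [pairLabel_add] using hlabel ⟨k + a, by omega⟩
  have hw : w = w' := by
    have := congrArg (fun i => (i ⟨0, by omega⟩ : ℕ)) h
    have hmod (x : Fin (2 * u - 1)) : ((x : ℤ) % ((2 * u - 1 : ℕ) : ℤ)).toNat = x := by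
      have := x.isLt
      rw [Int.emod_eq_of_lt (by omega) (by omega), Int.toNat_natCast]
    simp only [pairedWalk, pairPartialSum, range_zero, sum_empty, add_zero, hmod] at this
    exact Fin.ext this
  rw [hσ, hw]

theorem factorial_mul_descFactorial_le_card_paired (n : ℕ) (hk : 0 < k) :
    k ! * (u - 1).descFactorial k * (2 * u - 1)
      ≤ #{i : Fin (2 * k) → Fin (2 ^ (n + 1) * u) |
          ∀ j, #{j' | edgePsi n _ i j' = edgePsi n _ i j} = 2} := by
  calc k ! * (u - 1).descFactorial k * (2 * u - 1)
      = #(univ : Finset (Equiv.Perm (Fin k) × (Fin k ↪ Fin (u - 1)) × Fin (2 * u - 1))) := by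
        simp [Fintype.card_perm, Fintype.card_embedding_eq, mul_assoc]
    _ ≤ _ := by
        refine card_le_card_of_injOn _ (fun x _ => ?_) (pairedWalk_injective n hk).injOn
        simp only [coe_filter, mem_univ, true_and, Set.mem_ofPred_eq, edgePsi_pairedWalk,
          add_left_inj, Fin.val_inj, EmbeddingLike.apply_eq_iff_eq]
        exact fun j => card_pairLabel_eq x.1 _

end PairedWalk

theorem pow_succ_le_two_pow_mul_descFactorial {k u : ℕ} (hu : 2 * k ≤ u) :
    u ^ (k + 1) ≤ 2 ^ k * ((u - 1).descFactorial k * (2 * u - 1)) := by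
  have hdesc : (u - k) ^ k ≤ (u - 1).descFactorial k := by
    rcases Nat.eq_zero_or_pos u with rfl | hu₀
    · obtain rfl : k = 0 := by omega
      rfl
    simpa [show u - 1 + 1 - k = u - k by omega] using Nat.pow_sub_le_descFactorial (u - 1) k
  calc u ^ (k + 1) = u ^ k * u := pow_succ u k
    _ ≤ (2 * (u - k)) ^ k * (2 * u - 1) :=
        Nat.mul_le_mul (Nat.pow_le_pow_left (by omega) k) (by omega)
    _ ≤ 2 ^ k * ((u - 1).descFactorial k * (2 * u - 1)) := by
        rw [mul_pow, mul_assoc]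
        exact Nat.mul_le_mul_left _ (Nat.mul_le_mul_right _ hdesc)

theorem factorial_mul_pow_le_card_paired (n : ℕ) {k u : ℕ} (hk : 0 < k) (hu : 2 * k ≤ u) :
    k ! * u ^ (k + 1) ≤ 2 ^ k * #{i : Fin (2 * k) → Fin (2 ^ (n + 1) * u) |
      ∀ j, #{j' | edgePsi n _ i j' = edgePsi n _ i j} = 2} :=
  calc k ! * u ^ (k + 1) ≤ k ! * (2 ^ k * ((u - 1).descFactorial k * (2 * u - 1))) :=
        Nat.mul_le_mul_left _ (pow_succ_le_two_pow_mul_descFactorial hu)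
    _ = 2 ^ k * (k ! * (u - 1).descFactorial k * (2 * u - 1)) := by ring
    _ ≤ _ := Nat.mul_le_mul_left _ (factorial_mul_descFactorial_le_card_paired n hk)

theorem card_few_labels_le (n N : ℕ) (hdiv : 2 ^ n ∣ N) {k : ℕ} (hk : 0 < k) :
    #{i : Fin (2 * k) → Fin N | 2 * #(univ.image (edgePsi n N i)) < 2 * k}
      ≤ (2 * k) ^ (2 * k) * (N ^ k * (2 ^ (n + 2)) ^ (2 * k)) := by
  have hcount := card_walks_card_image_le (fun a b : Fin N => psi n N (a + 1) (b + 1)) (K := 2 * k)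
    (by omega) (card_psi_eq_le hdiv) (k - 1)
  rw [Fintype.card_fin, show k - 1 + 1 = k by omega] at hcount
  refine (card_le_card fun i hi => ?_).trans hcount
  simp only [mem_filter, mem_univ, true_and] at hi ⊢
  exact (show #(univ.image (edgePsi n N i)) ≤ k - 1 by omega)

theorem avgMoment_two_mul (μprod : Measure (ℕ → ℝ)) (n N k : ℕ) :
    avgMoment μprod n N (2 * k)
      = (∑ i : Fin (2 * k) → Fin N, ∫ b, ∏ j, b (edgePsi n N i j) ∂μprod)
        / (N : ℝ) ^ (k + 1) := by
  rw [avgMoment, inv_mul_eq_div, ← Real.rpow_natCast]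
  congr 2
  push_cast
  ring

theorem IsIidProduct.avgMoment_ge {p : Measure ℝ} [IsProbabilityMeasure p]
    {μprod : Measure (ℕ → ℝ)} (hprod : IsIidProduct p μprod)
    (hmean : ∫ x, x ∂p = 0) (hvar : ∫ x, x ^ 2 ∂p = 1)
    (hfin : ∀ k : ℕ, Integrable (fun x => x ^ k) p) (n : ℕ) {k u : ℕ} (hk : 0 < k)
    (hu : 2 * k ≤ u) :
    (k ! : ℝ) / (2 ^ k * (2 ^ (n + 1)) ^ (k + 1))
        - (1 + ∫ x, |x| ^ (2 * k) ∂p) ^ (2 * k) * ((2 * k) ^ (2 * k) * (2 ^ (n + 2)) ^ (2 * k))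
          / (2 ^ (n + 1) * u)
      ≤ avgMoment μprod n (2 ^ (n + 1) * u) (2 * k) := by
  set N := 2 ^ (n + 1) * u
  set D := (1 + ∫ x, |x| ^ (2 * k) ∂p) ^ (2 * k)
  have hD : 0 ≤ D := by
    have := integral_nonneg (μ := p) (f := fun x : ℝ => |x| ^ (2 * k)) fun x => by positivity
    positivity
  have hu₀ : (u : ℝ) ≠ 0 := by norm_cast; omega
  have hN : (0 : ℝ) < N := Nat.cast_pos.mpr (Nat.mul_pos (by positivity) (by omega))
  have hgood : (k ! * u ^ (k + 1) : ℝ) ≤ 2 ^ k * #{i : Fin (2 * k) → Fin N |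
      ∀ j, #{j' | edgePsi n N i j' = edgePsi n N i j} = 2} := by
    exact_mod_cast factorial_mul_pow_le_card_paired n hk hu
  have hbad : (#{i : Fin (2 * k) → Fin N | 2 * #(univ.image (edgePsi n N i)) < 2 * k} : ℝ)
      ≤ (2 * k) ^ (2 * k) * (N ^ k * (2 ^ (n + 2)) ^ (2 * k)) := by
    exact_mod_cast card_few_labels_le n N (Dvd.dvd.mul_right (pow_dvd_pow 2 n.le_succ) u) hk
  rw [avgMoment_two_mul, le_div_iff₀ (by positivity)]
  calc _ = (k ! * u ^ (k + 1) : ℝ) / 2 ^ k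
        - D * ((2 * k) ^ (2 * k) * (N ^ k * (2 ^ (n + 2)) ^ (2 * k))) := by
        simp only [N]
        push_cast
        field_simp
        ring
    _ ≤ _ := sub_le_sub (by rw [div_le_iff₀ (by positivity)]; linarith)
        (mul_le_mul_of_nonneg_left hbad hD)
    _ ≤ _ := hprod.sum_integral_prod_ge hmean hvar hfin (edgePsi n N (k := 2 * k))

theorem IsIidProduct.le_of_tendsto_avgMoment {p : Measure ℝ} [IsProbabilityMeasure p]
    {μprod : Measure (ℕ → ℝ)} (hprod : IsIidProduct p μprod)
    (hmean : ∫ x, x ∂p = 0) (hvar : ∫ x, x ^ 2 ∂p = 1)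
    (hfin : ∀ k : ℕ, Integrable (fun x => x ^ k) p) (n : ℕ) {k : ℕ} (hk : 0 < k) {L : ℝ}
    (htend : Tendsto (fun t : ℕ => avgMoment μprod n (2 ^ (n + 1) * (t + 1)) (2 * k))
      atTop (𝓝 L)) :
    (k ! : ℝ) / (2 ^ k * (2 ^ (n + 1)) ^ (k + 1)) ≤ L := by
  set E := (1 + ∫ x, |x| ^ (2 * k) ∂p) ^ (2 * k) * ((2 * k) ^ (2 * k) * (2 ^ (n + 2)) ^ (2 * k))
  have hN : Tendsto (fun t : ℕ => (2 : ℝ) ^ (n + 1) * ((t + 1 : ℕ) : ℝ)) atTop atTop :=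
    (tendsto_natCast_atTop_atTop.comp (tendsto_add_atTop_nat 1)).const_mul_atTop (by positivity)
  have hlow : Tendsto (fun t : ℕ => (k ! : ℝ) / (2 ^ k * (2 ^ (n + 1)) ^ (k + 1))
      - E / (2 ^ (n + 1) * ((t + 1 : ℕ) : ℝ))) atTop
      (𝓝 ((k ! : ℝ) / (2 ^ k * (2 ^ (n + 1)) ^ (k + 1)))) := by
    simpa using tendsto_const_nhds.sub (tendsto_const_nhds.div_atTop hN)
  refine le_of_tendsto_of_tendsto hlow htend ?_
  filter_upwards [eventually_ge_atTop (2 * k)] with t ht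
  exact hprod.avgMoment_ge hmean hvar hfin n hk (by omega)

theorem measure_compl_Icc_pos_of_moment_ge (μ : Measure ℝ) [IsProbabilityMeasure μ] {C A : ℝ}
    (hC : 0 < C) (hA : 0 < A)
    (hmom : ∀ k : ℕ, 0 < k → C * k ! / A ^ k ≤ ∫ x, x ^ (2 * k) ∂μ)
    (B : ℝ) : 0 < μ (Set.Icc (-B) B)ᶜ := by
  by_contra! hzero
  have hbound : ∀ k, ∫ x, x ^ (2 * k) ∂μ ≤ B ^ (2 * k) := fun k => by
    have hae : ∀ᵐ x ∂μ, ‖x ^ (2 * k)‖ ≤ B ^ (2 * k) := by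
      filter_upwards [measure_eq_zero_iff_ae_notMem.mp (nonpos_iff_eq_zero.mp hzero)] with x hx
      simp only [Set.mem_compl_iff, not_not] at hx
      rw [norm_pow, Real.norm_eq_abs]
      exact pow_le_pow_left₀ (abs_nonneg x) (abs_le.mpr hx) _
    simpa using (le_abs_self _).trans (norm_integral_le_of_norm_le_const hae)
  obtain ⟨k, hsmall, hk⟩ :=
    (((FloorSemiring.tendsto_pow_div_factorial_atTop (A * B ^ 2)).eventually
      (gt_mem_nhds hC)).and (eventually_gt_atTop 0)).exists
  have := (hmom k hk).trans (hbound k)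
  rw [div_lt_iff₀ (by positivity), mul_pow, ← pow_mul] at hsmall
  rw [div_le_iff₀ (by positivity)] at this
  nlinarith [pow_pos hA k]

theorem stmt3_general (n : ℕ) (p : Measure ℝ) [IsProbabilityMeasure p]
    (hmean : ∫ x, x ∂p = 0) (hvar : ∫ x, x ^ 2 ∂p = 1)
    (hfin : ∀ k : ℕ, Integrable (fun x => x ^ k) p)
    (μprod : Measure (ℕ → ℝ))
    (hprod : ∀ (s : Finset ℕ) (A : ℕ → Set ℝ), (∀ i, MeasurableSet (A i)) →
      μprod {b | ∀ i ∈ s, b i ∈ A i} = ∏ i ∈ s, p (A i))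
    (μ : Measure ℝ) [IsProbabilityMeasure μ]
    (hμ : ∀ k : ℕ, 1 ≤ k → Integrable (fun x => x ^ k) μ ∧
      Tendsto (fun t : ℕ => avgMoment μprod n (2 ^ (n + 1) * (t + 1)) k) atTop
        (nhds (∫ x, x ^ k ∂μ))) :
    ∀ B : ℝ, 0 < B → 0 < μ (Set.Icc (-B) B)ᶜ := by
  intro B _
  refine measure_compl_Icc_pos_of_moment_ge μ (C := (2 ^ (n + 1))⁻¹) (A := 2 * 2 ^ (n + 1))
    (by positivity) (by positivity) (fun k hk => ?_) B
  have hmom := IsIidProduct.le_of_tendsto_avgMoment hprod hmean hvar hfin n hk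
    (hμ (2 * k) (by omega)).2
  convert hmom using 1
  rw [mul_pow, pow_succ]
  field_simp
  ring

/-- for `n ≥ 1`, the limiting spectral measure (the probability
measure whose `k`-th moments are the limits `M_{k,n}`) has unbounded support:
`μ_n(ℝ \ [-B,B]) > 0` for every `B > 0`. -/
theorem stmt3 (n : ℕ) (hn : 1 ≤ n) (p : Measure ℝ) [IsProbabilityMeasure p]
    (hmean : ∫ x, x ∂p = 0) (hvar : ∫ x, x ^ 2 ∂p = 1)
    (hfin : ∀ k : ℕ, Integrable (fun x => x ^ k) p)
    (μprod : Measure (ℕ → ℝ)) [IsProbabilityMeasure μprod]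
    (hprod : ∀ (s : Finset ℕ) (A : ℕ → Set ℝ), (∀ i, MeasurableSet (A i)) →
      μprod {b | ∀ i ∈ s, b i ∈ A i} = ∏ i ∈ s, p (A i))
    (μ : Measure ℝ) [IsProbabilityMeasure μ]
    (hμ : ∀ k : ℕ, 1 ≤ k → Integrable (fun x => x ^ k) μ ∧
      Tendsto (fun t : ℕ => avgMoment μprod n (2 ^ (n + 1) * (t + 1)) k) atTop
        (nhds (∫ x, x ^ k ∂μ))) :
    ∀ B : ℝ, 0 < B → 0 < μ (Set.Icc (-B) B)ᶜ :=
  stmt3_general n p hmean hvar hfin μprod hprod μ hμ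
end
end

section
/- Fix integers n ≥ 0 and m ≥ 1. There is a constant c_{n,m} (independent of N) such that for every positive multiple N of 2^{n+1}, the number of tuples (i_1,…,i_{2m}) ∈ {1,…,N}^{2m} with the property that in the cyclic list of values ψ_N(i_1,i_2), ψ_N(i_2,i_3), …, ψ_N(i_{2m},i_1) every value that occurs occurs at least twice and at least one value occurs at least three times, is at most c_{n,m} N^m. Consequently such tuples contribute nothing to the average 2m-th moment M_{2m,n;N} in the limit N → ∞. -/
open MeasureTheory Filter Finset

noncomputable section

/-! Every edge value of a bad tuple occurs at least twice and one at least three times, so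
among the `2m` edges there are at most `m - 1` distinct values, each below `P = N / 2^n`.
Modulo `P`, a vertex differs from its predecessor by one of `±v, ±(v + 1)`, where `v` is the
value of the edge between them, and each residue has `2^n` lifts to `{1,…,N}`. So a bad tuple
is determined by its first vertex, its sequence of edge values (at most `P^(m-1) (m-1)^(2m)`
choices) and `2m` choices among `4 · 2^n`, which gives `O(N^m)` tuples. -/

open Function

section Multiplicity

variable {ι β : Type*} [Fintype ι] [DecidableEq β]

abbrev AllRepeatedSomeTripled (f : ι → β) : Prop :=
  (∀ j, 2 ≤ #{j' | f j' = f j}) ∧ ∃ j, 3 ≤ #{j' | f j' = f j}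

theorem AllRepeatedSomeTripled.two_mul_card_image_lt {f : ι → β}
    (hf : AllRepeatedSomeTripled f) : 2 * #(univ.image f) < Fintype.card ι := by
  obtain ⟨hrep, j₀, htrip⟩ := hf
  calc 2 * #(univ.image f) = ∑ _v ∈ univ.image f, 2 := by rw [sum_const, smul_eq_mul, mul_comm]
    _ < ∑ v ∈ univ.image f, #{j | f j = v} := by
        refine sum_lt_sum (fun v hv ↦ ?_) ⟨f j₀, mem_image_of_mem _ (mem_univ _), htrip⟩
        obtain ⟨j, -, rfl⟩ := mem_image.mp hv
        exact hrep j
    _ = Fintype.card ι :=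
        (card_eq_sum_card_fiberwise fun j _ ↦ mem_image_of_mem f (mem_univ j)).symm

theorem card_filter_card_image_le [DecidableEq ι] {s : Finset β} (hs : s.Nonempty) (r : ℕ) :
    #{e ∈ Fintype.piFinset fun _ : ι ↦ s | #(univ.image e) ≤ r} ≤
      #s ^ r * r ^ Fintype.card ι := by
  obtain ⟨b₀, hb₀⟩ := hs
  calc #{e ∈ Fintype.piFinset fun _ : ι ↦ s | #(univ.image e) ≤ r}
      ≤ #(((Fintype.piFinset fun _ : Fin r ↦ s) ×ˢ (univ : Finset (ι → Fin r))).image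
          fun gp ↦ gp.1 ∘ gp.2) := by
        refine card_le_card fun e he ↦ ?_
        obtain ⟨hes, her⟩ := mem_filter.mp he
        set t := univ.image e
        let g : Fin r → β := fun k ↦ if hk : k.val < #t then t.equivFin.symm ⟨k, hk⟩ else b₀
        let p : ι → Fin r := fun j ↦
          Fin.castLE her (t.equivFin ⟨e j, mem_image_of_mem e (mem_univ j)⟩)
        refine mem_image.mpr ⟨(g, p),
          mem_product.mpr ⟨Fintype.mem_piFinset.mpr fun k ↦ ?_, mem_univ _⟩, ?_⟩
        · simp only [g]
          split_ifs
          · obtain ⟨j, -, hj⟩ := mem_image.mp (t.equivFin.symm ⟨k, _⟩).2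
            exact hj ▸ Fintype.mem_piFinset.mp hes j
          · exact hb₀
        · funext j
          simp [g, p]
    _ ≤ #s ^ r * r ^ Fintype.card ι := by
        refine card_image_le.trans_eq ?_
        simp [Fintype.card_piFinset]

end Multiplicity

theorem exists_injective_prodMk_fin {α β : Type*} [Fintype α] [DecidableEq β] (f : α → β)
    {B : ℕ} (hB : ∀ v, #{x | f x = v} ≤ B) : ∃ c : α → Fin B, Injective fun x ↦ (f x, c x) := by
  have hemb (v : β) : Nonempty ({x // f x = v} ↪ Fin B) :=
    Embedding.nonempty_of_card_le (by simpa [Fintype.card_subtype] using hB v)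
  let e v := (hemb v).some
  refine ⟨fun x ↦ e (f x) ⟨x, rfl⟩, fun x y hxy ↦ ?_⟩
  obtain ⟨hf, hc⟩ := Prod.mk.inj hxy
  have transport : ∀ v (hx : f x = v), e v ⟨x, hx⟩ = e (f x) ⟨x, rfl⟩ := by rintro _ rfl; rfl
  exact congrArg Subtype.val ((e (f y)).injective ((transport _ hf).trans hc))

theorem injective_head_cycSucc_steps {α β : Type*} {k : ℕ} (hk : 0 < k) (d : α → α → β)
    (hd : ∀ a, Injective (d a)) :
    Injective fun i : Fin k → α ↦ (i ⟨0, hk⟩, fun j ↦ d (i j) (i (cycSucc j))) := by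
  intro i i' h
  obtain ⟨h₀, hsteps⟩ := Prod.mk.inj h
  have hprefix : ∀ t (ht : t < k), i ⟨t, ht⟩ = i' ⟨t, ht⟩ := by
    intro t
    induction t with
    | zero => exact fun _ ↦ h₀
    | succ t ih =>
      intro ht
      have hsucc : cycSucc (⟨t, by omega⟩ : Fin k) = ⟨t + 1, ht⟩ := by
        simp [cycSucc, Nat.mod_eq_of_lt ht]
      have hstep := congrFun hsteps ⟨t, by omega⟩
      rw [hsucc, ih (by omega)] at hstep
      exact hd _ hstep
  exact funext fun j ↦ hprefix j j.isLt

theorem psi_lt (n N a b : ℕ) (hP : 0 < N / 2 ^ n) : psi n N a b < N / 2 ^ n :=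
  (min_le_left _ _).trans_lt (Nat.mod_lt _ hP)

theorem natCast_sub_mem_of_psi_eq {n N a x v : ℕ} (hP : 0 < N / 2 ^ n)
    (hv : psi n N (a + 1) (x + 1) = v) :
    (x : ZMod (N / 2 ^ n)) - a ∈ ({(v : ZMod (N / 2 ^ n)), -(v : ZMod (N / 2 ^ n)),
      (v : ZMod (N / 2 ^ n)) + 1, -((v : ZMod (N / 2 ^ n)) + 1)} : Finset _) := by
  set P := N / 2 ^ n
  set d : ℤ := ((a + 1 : ℕ) : ℤ) - ((x + 1 : ℕ) : ℤ)
  set r := d.natAbs % P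
  have hd : (d : ZMod P) = a - x := by push_cast [d]; ring
  have hr : (r : ZMod P) = a - x ∨ (r : ZMod P) = x - a := by
    rw [ZMod.natCast_mod, ← Int.cast_natCast]
    rcases Int.natAbs_eq d with h | h
    · exact .inl (by rw [← h, hd])
    · exact .inr (by rw [show (d.natAbs : ℤ) = -d by omega, Int.cast_neg, hd]; ring)
  have hv' : (v : ZMod P) = r ∨ (v : ZMod P) = -1 - r := by
    rcases min_choice r (P - 1 - r) with h | h <;> rw [← hv, psi, h]
    · exact .inl rfl
    · have hrP : r < P := Nat.mod_lt _ hP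
      right
      rw [Nat.cast_sub (by omega), Nat.cast_sub hP, ZMod.natCast_self]
      ring
  simp only [Finset.mem_insert, Finset.mem_singleton]
  rcases hr with hr | hr <;> rcases hv' with hv' | hv'
  · exact .inr (.inl (by rw [hv', hr]; ring))
  · exact .inr (.inr (.inl (by rw [hv', hr]; ring)))
  · exact .inl (by rw [hv', hr])
  · exact .inr (.inr (.inr (by rw [hv', hr]; ring)))

theorem card_filter_psi_eq_le (n N a v : ℕ) (hN : 2 ^ n ∣ N) :
    #{x : Fin N | psi n N (a + 1) (x + 1) = v} ≤ 4 * 2 ^ n := by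
  set P := N / 2 ^ n
  have hNP : N = 2 ^ n * P := (Nat.mul_div_cancel' hN).symm
  rcases Nat.eq_zero_or_pos P with hP | hP
  · rw [hNP, hP, mul_zero]
    simp
  have hquot (x : Fin N) : (x : ℕ) / P < 2 ^ n := by
    rw [Nat.div_lt_iff_lt_mul hP, ← hNP]
    exact x.isLt
  calc #{x : Fin N | psi n N (a + 1) (x + 1) = v}
      ≤ #(({(v : ZMod P), -(v : ZMod P), (v : ZMod P) + 1, -((v : ZMod P) + 1)} : Finset _) ×ˢ
          (univ : Finset (Fin (2 ^ n)))) := by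
        refine card_le_card_of_injOn (fun x ↦ ((x : ZMod P) - a, ⟨x / P, hquot x⟩))
          (fun x hx ↦ mem_product.mpr ⟨natCast_sub_mem_of_psi_eq hP (mem_filter.mp hx).2,
            mem_univ _⟩) (fun x _ y _ hxy ↦ ?_)
        obtain ⟨hmod, hdiv⟩ := Prod.mk.inj hxy
        rw [sub_left_inj, ZMod.natCast_eq_natCast_iff' _ _ P] at hmod
        have hx := Nat.div_add_mod (x : ℕ) P
        have hy := Nat.div_add_mod (y : ℕ) P
        rw [Fin.mk.injEq] at hdiv
        exact Fin.ext (by rw [← hx, ← hy, hdiv, hmod])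
    _ ≤ 4 * 2 ^ n := by
        rw [card_product, card_univ, Fintype.card_fin]
        exact Nat.mul_le_mul_right _ card_le_four

theorem card_filter_allRepeatedSomeTripled_edgePsi_le (n m N : ℕ) (hN : 2 ^ n ∣ N) :
    #{i : Fin (2 * m) → Fin N | AllRepeatedSomeTripled (edgePsi n N i)} ≤
      (m - 1) ^ (2 * m) * (4 * 2 ^ n) ^ (2 * m) * N ^ m := by
  set S : Finset _ := {i : Fin (2 * m) → Fin N | AllRepeatedSomeTripled (edgePsi n N i)}
  rcases S.eq_empty_or_nonempty with hS | ⟨i₀, hi₀⟩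
  · simp [hS]
  obtain ⟨j₀, -⟩ := (mem_filter.mp hi₀).2.2
  have hk : 0 < 2 * m := j₀.pos
  have hNpos : 0 < N := (i₀ j₀).pos
  set P := N / 2 ^ n
  have hP : 0 < P := Nat.div_pos (Nat.le_of_dvd hNpos hN) (by positivity)
  set E := {e ∈ Fintype.piFinset fun _ : Fin (2 * m) ↦ range P | #(univ.image e) ≤ m - 1}
  choose c hc using fun a : Fin N ↦ exists_injective_prodMk_fin
    (fun x : Fin N ↦ psi n N (a + 1) (x + 1)) (card_filter_psi_eq_le n N a · hN)
  have hwalk :=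
    injective_head_cycSucc_steps hk (fun a x : Fin N ↦ (psi n N (a + 1) (x + 1), c a x)) hc
  calc #S
      ≤ #((univ : Finset (Fin N)) ×ˢ E ×ˢ (univ : Finset (Fin (2 * m) → Fin (4 * 2 ^ n)))) := by
        refine card_le_card_of_injOn
          (fun i ↦ (i ⟨0, hk⟩, edgePsi n N i, fun j ↦ c (i j) (i (cycSucc j)))) ?_ ?_
        · intro i hi
          have himage := (mem_filter.mp hi).2.two_mul_card_image_lt
          rw [Fintype.card_fin] at himage
          have hcard : #(univ.image (edgePsi n N i)) ≤ m - 1 := by omega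
          exact mem_product.mpr ⟨mem_univ _, mem_product.mpr ⟨mem_filter.mpr
            ⟨Fintype.mem_piFinset.mpr fun j ↦ mem_range.mpr (psi_lt _ _ _ _ hP), hcard⟩,
            mem_univ _⟩⟩
        · intro i _ i' _ h
          simp only [Prod.mk.injEq] at h
          obtain ⟨h₀, hedge, hcode⟩ := h
          exact hwalk (Prod.ext h₀ (funext fun j ↦ Prod.ext (congrFun hedge j) (congrFun hcode j)))
    _ = (4 * 2 ^ n) ^ (2 * m) * (N * #E) := by simp [card_product]; ring
    _ ≤ (4 * 2 ^ n) ^ (2 * m) * (N * (P ^ (m - 1) * (m - 1) ^ (2 * m))) := by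
        gcongr
        simpa using
          card_filter_card_image_le (ι := Fin (2 * m)) (nonempty_range_iff.mpr hP.ne') (m - 1)
    _ = (m - 1) ^ (2 * m) * (4 * 2 ^ n) ^ (2 * m) * (N * P ^ (m - 1)) := by ring
    _ ≤ (m - 1) ^ (2 * m) * (4 * 2 ^ n) ^ (2 * m) * N ^ m := by
        gcongr
        calc N * P ^ (m - 1) ≤ N * N ^ (m - 1) := by gcongr; exact Nat.div_le_self _ _
          _ = N ^ m := by rw [← pow_succ', Nat.sub_add_cancel (by omega)]

theorem tendsto_div_pow_succ_of_le_mul_pow {a : ℕ → ℝ} {N : ℕ → ℕ} {c : ℝ} {m : ℕ}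
    (ha : ∀ t, 0 ≤ a t) (hle : ∀ t, a t ≤ c * N t ^ m) (hN : Tendsto N atTop atTop) :
    Tendsto (fun t ↦ a t / (N t : ℝ) ^ (m + 1)) atTop (nhds 0) := by
  refine squeeze_zero (fun t ↦ by have := ha t; positivity) (fun t ↦ ?_)
    (tendsto_const_nhds.div_atTop (tendsto_natCast_atTop_atTop.comp hN) :
      Tendsto (fun t ↦ c / N t) _ _)
  rcases (N t).eq_zero_or_pos with h | h
  · simp [h]
  rw [div_le_div_iff₀ (by positivity) (by positivity)]
  calc a t * N t ≤ c * N t ^ m * N t := by gcongr; exact hle t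
    _ = c * (N t : ℝ) ^ (m + 1) := by ring

theorem stmt7_general (n m : ℕ) :
    ∃ c : ℝ, ∀ N : ℕ, 0 < N → 2 ^ (n + 1) ∣ N →
      (((Finset.univ.filter fun i : Fin (2 * m) → Fin N =>
          (∀ j : Fin (2 * m),
            2 ≤ (Finset.univ.filter fun j' : Fin (2 * m) =>
              edgePsi n N i j' = edgePsi n N i j).card) ∧
          (∃ j : Fin (2 * m),
            3 ≤ (Finset.univ.filter fun j' : Fin (2 * m) =>
              edgePsi n N i j' = edgePsi n N i j).card)).card : ℝ)
        ≤ c * (N : ℝ) ^ m) ∧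
    Tendsto (fun t : ℕ =>
        ((Finset.univ.filter fun i : Fin (2 * m) → Fin (2 ^ (n + 1) * (t + 1)) =>
          (∀ j : Fin (2 * m),
            2 ≤ (Finset.univ.filter fun j' : Fin (2 * m) =>
              edgePsi n (2 ^ (n + 1) * (t + 1)) i j' =
                edgePsi n (2 ^ (n + 1) * (t + 1)) i j).card) ∧
          (∃ j : Fin (2 * m),
            3 ≤ (Finset.univ.filter fun j' : Fin (2 * m) =>
              edgePsi n (2 ^ (n + 1) * (t + 1)) i j' =
                edgePsi n (2 ^ (n + 1) * (t + 1)) i j).card)).card : ℝ) /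
          ((2 ^ (n + 1) * (t + 1) : ℕ) : ℝ) ^ (m + 1))
      atTop (nhds 0) := by
  set C : ℕ := (m - 1) ^ (2 * m) * (4 * 2 ^ n) ^ (2 * m)
  have hbound (N : ℕ) (hN : 2 ^ (n + 1) ∣ N) :
      (#{i : Fin (2 * m) → Fin N | AllRepeatedSomeTripled (edgePsi n N i)} : ℝ) ≤ C * N ^ m := by
    exact_mod_cast
      card_filter_allRepeatedSomeTripled_edgePsi_le n m N ((pow_dvd_pow 2 n.le_succ).trans hN)
  refine ⟨C, fun N _ hN ↦ ⟨hbound N hN, tendsto_div_pow_succ_of_le_mul_pow (fun t ↦ by positivity)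
    (fun t ↦ hbound _ (dvd_mul_right _ _)) ?_⟩⟩
  exact tendsto_atTop_mono (fun t ↦ Nat.le_mul_of_pos_left _ (by positivity))
    (tendsto_add_atTop_nat 1)

/-- the number of tuples `(i₁,…,i_{2m}) ∈ {1,…,N}^{2m}` such that in
the cyclic list of values `ψ_N(i₁,i₂),…,ψ_N(i_{2m},i₁)` every value occurring
occurs at least twice and some value occurs at least three times is `O_{n,m}(N^m)`;
consequently such tuples contribute nothing to the average `2m`-th moment in
the limit. -/
theorem stmt7 (n m : ℕ) (hm : 1 ≤ m) :
    ∃ c : ℝ, ∀ N : ℕ, 0 < N → 2 ^ (n + 1) ∣ N →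
      (((Finset.univ.filter fun i : Fin (2 * m) → Fin N =>
          (∀ j : Fin (2 * m),
            2 ≤ (Finset.univ.filter fun j' : Fin (2 * m) =>
              edgePsi n N i j' = edgePsi n N i j).card) ∧
          (∃ j : Fin (2 * m),
            3 ≤ (Finset.univ.filter fun j' : Fin (2 * m) =>
              edgePsi n N i j' = edgePsi n N i j).card)).card : ℝ)
        ≤ c * (N : ℝ) ^ m) ∧
    Tendsto (fun t : ℕ =>
        ((Finset.univ.filter fun i : Fin (2 * m) → Fin (2 ^ (n + 1) * (t + 1)) =>
          (∀ j : Fin (2 * m),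
            2 ≤ (Finset.univ.filter fun j' : Fin (2 * m) =>
              edgePsi n (2 ^ (n + 1) * (t + 1)) i j' =
                edgePsi n (2 ^ (n + 1) * (t + 1)) i j).card) ∧
          (∃ j : Fin (2 * m),
            3 ≤ (Finset.univ.filter fun j' : Fin (2 * m) =>
              edgePsi n (2 ^ (n + 1) * (t + 1)) i j' =
                edgePsi n (2 ^ (n + 1) * (t + 1)) i j).card)).card : ℝ) /
          ((2 ^ (n + 1) * (t + 1) : ℕ) : ℝ) ^ (m + 1))
      atTop (nhds 0) :=
  stmt7_general n m

end
end

section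
/- Fix an integer m ≥ 1 and a perfect matching π of {1,…,2m} into m unordered pairs, and for each pair {q,l} ∈ π (with q < l) choose a sign ε_{ql} ∈ {+1,−1} and an integer C_{ql}, such that at least one of the signs equals +1. Then there is a constant c_m depending only on m (not on N or on the constants C_{ql}) such that for every N ≥ 1, the number of tuples (i_1,…,i_{2m}) ∈ {1,…,N}^{2m} satisfying i_q − i_{q+1} = ε_{ql}(i_l − i_{l+1}) + C_{ql} for every pair {q,l} ∈ π (indices read cyclically, i_{2m+1} = i_1) is at most c_m N^m. -/
/-!
The cyclic differences `Δ_j = i_j - i_{j+1}` of a tuple sum to zero, and the tuple is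
determined by `i_1` and its differences. For two solutions, `e = Δ - Δ'` solves the
homogeneous system `e_j = ε_j e_{π j}`. If `Δ` and `Δ'` agree at the lower ends of all pairs
but one pair `{j₀, π j₀}` with `ε_{j₀} = 1`, every other pair contributes `0` to `∑ e = 0`,
which leaves `2 e_{j₀} = 0`; so `e = 0`. Hence a solution is determined by `i_1` and `m - 1`
differences in `[-N, N]`, and there are at most `N (2N + 1)^{m-1} ≤ (3N)^m` solutions.
-/

open Filter Finset

noncomputable section

section Cyclic

variable {k : ℕ} {G : Type*} [AddCommGroup G]

lemma cycSucc_eq_add_one {n : ℕ} (j : Fin (n + 1)) : cycSucc j = j + 1 :=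
  Fin.ext (by simp [cycSucc, Fin.val_add])

lemma cycSucc_bijective : Function.Bijective (cycSucc : Fin k → Fin k) := by
  cases k with
  | zero => exact ⟨fun j => j.elim0, fun j => j.elim0⟩
  | succ n =>
    rw [show cycSucc = (· + 1) from funext cycSucc_eq_add_one]
    exact (Equiv.addRight 1).bijective

def cycDiff (x : Fin k → G) (j : Fin k) : G := x j - x (cycSucc j)

lemma sum_cycDiff (x : Fin k → G) : ∑ j, cycDiff x j = 0 := by
  simp only [cycDiff, sum_sub_distrib,
    Function.Bijective.sum_comp cycSucc_bijective x, sub_self]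

lemma eq_of_cycDiff_eq {n : ℕ} {x y : Fin (n + 1) → G} (h0 : x 0 = y 0)
    (h : cycDiff x = cycDiff y) : x = y := by
  funext j
  induction j using Fin.induction with
  | zero => exact h0
  | succ j ih =>
    have hj := congrFun h j.castSucc
    rw [cycDiff, cycDiff, cycSucc_eq_add_one, Fin.coeSucc_eq_succ, ih] at hj
    exact sub_right_injective hj

end Cyclic

section Matching

variable {k : ℕ} {π : Fin k → Fin k}

def lowerEnds (π : Fin k → Fin k) : Finset (Fin k) := univ.filter fun j => j < π j

lemma mem_lowerEnds {j : Fin k} : j ∈ lowerEnds π ↔ j < π j := by simp [lowerEnds]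

lemma sum_eq_sum_lowerEnds {M : Type*} [AddCommMonoid M] (hπ : Function.Involutive π)
    (hfix : ∀ j, π j ≠ j) (f : Fin k → M) :
    ∑ j, f j = ∑ j ∈ lowerEnds π, (f j + f (π j)) := by
  have hunion : lowerEnds π ∪ (lowerEnds π).image π = univ := by
    refine eq_univ_of_forall fun j => ?_
    rcases lt_or_gt_of_ne (hfix j).symm with h | h
    · exact mem_union_left _ (mem_lowerEnds.2 h)
    · exact mem_union_right _ (mem_image.2 ⟨π j, mem_lowerEnds.2 (by rwa [hπ j]), hπ j⟩)
  have hdisj : Disjoint (lowerEnds π) ((lowerEnds π).image π) := by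
    refine disjoint_left.2 fun j hj hj' => ?_
    obtain ⟨a, ha, rfl⟩ := mem_image.1 hj'
    rw [mem_lowerEnds, hπ a] at hj
    exact lt_asymm hj (mem_lowerEnds.1 ha)
  rw [← hunion, sum_union hdisj, sum_image hπ.injective.injOn, sum_add_distrib]

lemma two_mul_card_lowerEnds (hπ : Function.Involutive π) (hfix : ∀ j, π j ≠ j) :
    2 * #(lowerEnds π) = k := by
  have := sum_eq_sum_lowerEnds hπ hfix fun _ => 1
  simp only [sum_const, card_univ, Fintype.card_fin, smul_eq_mul, mul_one, Nat.reduceAdd] at this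
  omega

end Matching

section Constraints

variable {k : ℕ} {π : Fin k → Fin k} {ε C : Fin k → ℤ}

def IsSolution (π : Fin k → Fin k) (ε C : Fin k → ℤ) (x : Fin k → ℤ) : Prop :=
  ∀ j ∈ lowerEnds π, cycDiff x j = ε j * cycDiff x (π j) + C j

instance : DecidablePred (IsSolution π ε C) :=
  fun _ => inferInstanceAs (Decidable (∀ j ∈ lowerEnds π, _))

lemma eq_zero_of_pairing (hπ : Function.Involutive π) (hfix : ∀ j, π j ≠ j)
    (hε : ∀ j, ε j = 1 ∨ ε j = -1) {e : Fin k → ℤ} (hsum : ∑ j, e j = 0)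
    (hpair : ∀ j ∈ lowerEnds π, e j = ε j * e (π j)) {j₀ : Fin k} (hj₀ : j₀ ∈ lowerEnds π)
    (hε₀ : ε j₀ = 1) (hzero : ∀ j ∈ lowerEnds π, j ≠ j₀ → e j = 0) : e = 0 := by
  have hpartner : ∀ j ∈ lowerEnds π, j ≠ j₀ → e (π j) = 0 := by
    intro j hj hne
    have h := hpair j hj
    rw [hzero j hj hne] at h
    rcases hε j with hεj | hεj <;> simp only [hεj] at h <;> linarith
  have hj₀_pair : e j₀ = e (π j₀) := by simpa [hε₀] using hpair j₀ hj₀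
  have he₀ : e j₀ = 0 := by
    rw [sum_eq_sum_lowerEnds hπ hfix, sum_eq_single_of_mem j₀ hj₀
      fun j hj hne => by rw [hzero j hj hne, hpartner j hj hne, add_zero]] at hsum
    omega
  have hlower : ∀ j ∈ lowerEnds π, e j = 0 ∧ e (π j) = 0 := by
    intro j hj
    by_cases hne : j = j₀
    · subst hne; exact ⟨he₀, hj₀_pair ▸ he₀⟩
    · exact ⟨hzero j hj hne, hpartner j hj hne⟩
  funext j
  rcases lt_or_gt_of_ne (hfix j).symm with h | h
  · exact (hlower j (mem_lowerEnds.2 h)).1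
  · simpa [hπ j] using (hlower (π j) (mem_lowerEnds.2 (by rwa [hπ j]))).2

lemma cycDiff_eq_of_isSolution (hπ : Function.Involutive π) (hfix : ∀ j, π j ≠ j)
    (hε : ∀ j, ε j = 1 ∨ ε j = -1) {j₀ : Fin k} (hj₀ : j₀ ∈ lowerEnds π) (hε₀ : ε j₀ = 1)
    {x y : Fin k → ℤ} (hx : IsSolution π ε C x) (hy : IsSolution π ε C y)
    (hxy : ∀ j ∈ (lowerEnds π).erase j₀, cycDiff x j = cycDiff y j) :
    cycDiff x = cycDiff y := by
  have h := eq_zero_of_pairing (e := cycDiff x - cycDiff y) hπ hfix hε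
    (by simp [sum_sub_distrib, sum_cycDiff])
    (fun j hj => by simp only [Pi.sub_apply, hx j hj, hy j hj]; ring) hj₀ hε₀
    (fun j hj hne => sub_eq_zero.2 (hxy j (mem_erase.2 ⟨hne, hj⟩)))
  exact sub_eq_zero.1 h

lemma card_isSolution_le (hπ : Function.Involutive π) (hfix : ∀ j, π j ≠ j)
    (hε : ∀ j, ε j = 1 ∨ ε j = -1) {j₀ : Fin k} (hj₀ : j₀ ∈ lowerEnds π) (hε₀ : ε j₀ = 1)
    (N : ℕ) :
    #(univ.filter fun x : Fin k → Fin N => IsSolution π ε C fun j => (x j : ℤ))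
      ≤ N * (2 * N + 1) ^ (#(lowerEnds π) - 1) := by
  obtain _ | n := k
  · exact j₀.elim0
  set sols := univ.filter fun x : Fin (n + 1) → Fin N => IsSolution π ε C fun j => (x j : ℤ)
  set S := (lowerEnds π).erase j₀
  let f : (Fin (n + 1) → Fin N) → Fin N × (S → ℤ) :=
    fun x => (x 0, fun j => cycDiff (fun j => (x j : ℤ)) j)
  set T : Finset (Fin N × (S → ℤ)) := univ ×ˢ Fintype.piFinset fun _ => Icc (-(N : ℤ)) N
  have hmaps : Set.MapsTo f sols T := by
    intro x _
    simp only [f, T, coe_product, coe_univ, Set.mem_prod, Set.mem_univ, true_and, mem_coe,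
      Fintype.mem_piFinset, mem_Icc, cycDiff]
    intro j
    omega
  have hinj : Set.InjOn f sols := by
    intro x hx y hy hxy
    rw [mem_coe, mem_filter] at hx hy
    simp only [f, Prod.mk.injEq, funext_iff] at hxy
    have h := eq_of_cycDiff_eq (congrArg (fun a : Fin N => (a : ℤ)) hxy.1)
      (cycDiff_eq_of_isSolution hπ hfix hε hj₀ hε₀ hx.2 hy.2 fun j hj => hxy.2 ⟨j, hj⟩)
    funext j
    exact Fin.ext (by exact_mod_cast congrFun h j)
  refine (card_le_card_of_injOn f hmaps hinj).trans_eq ?_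
  have hIcc : (N + 1 + N : ℤ).toNat = 2 * N + 1 := by omega
  simp [T, S, card_erase_of_mem hj₀, Int.card_Icc, hIcc]

end Constraints

theorem stmt8_general (m : ℕ) :
    ∃ c : ℝ, ∀ N : ℕ, 1 ≤ N → ∀ π : Fin (2 * m) → Fin (2 * m),
      Function.Involutive π → (∀ j, π j ≠ j) →
      ∀ ε C : Fin (2 * m) → ℤ,
      (∀ j, ε j = 1 ∨ ε j = -1) → (∃ j, j < π j ∧ ε j = 1) →
      ((Finset.univ.filter fun i : Fin (2 * m) → Fin N =>
          ∀ j, j < π j →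
            (((i j : ℕ) + 1 : ℤ) - ((i (cycSucc j) : ℕ) + 1 : ℤ)) =
              ε j * (((i (π j) : ℕ) + 1 : ℤ) - ((i (cycSucc (π j)) : ℕ) + 1 : ℤ))
                + C j).card : ℝ)
        ≤ c * (N : ℝ) ^ m := by
  refine ⟨3 ^ m, fun N hN π hπ hfix ε C hε ⟨j₀, hj₀, hε₀⟩ => ?_⟩
  rw [← mem_lowerEnds] at hj₀
  have hcard : #(lowerEnds π) = m := by linarith [two_mul_card_lowerEnds hπ hfix]
  have hm : 1 ≤ m := hcard ▸ card_pos.2 ⟨j₀, hj₀⟩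
  rw [filter_congr fun x _ => show _ ↔ IsSolution π ε C fun j => (x j : ℤ) by
    simp only [IsSolution, mem_lowerEnds, cycDiff, add_sub_add_right_eq_sub]]
  have hbound := card_isSolution_le (C := C) hπ hfix hε hj₀ hε₀ N
  rw [hcard] at hbound
  have hpow : N * (2 * N + 1) ^ (m - 1) ≤ (3 * N) ^ m :=
    calc N * (2 * N + 1) ^ (m - 1) ≤ (2 * N + 1) * (2 * N + 1) ^ (m - 1) := by gcongr; omega
      _ = (2 * N + 1) ^ m := by rw [← pow_succ', Nat.sub_add_cancel hm]
      _ ≤ (3 * N) ^ m := by gcongr; omega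
  rw [← mul_pow]
  exact_mod_cast hbound.trans hpow

/-- for a perfect matching `π` of the `2m` cyclic differences, signs
`ε` with at least one `+1`, and integer constants `C`, the number of tuples
`(i₁,…,i_{2m}) ∈ {1,…,N}^{2m}` satisfying
`i_q - i_{q+1} = ε_{ql}(i_l - i_{l+1}) + C_{ql}` for every pair `{q,l} ∈ π`
is at most `c_m N^m`, with `c_m` depending only on `m`. -/
theorem stmt8 (m : ℕ) (hm : 1 ≤ m) :
    ∃ c : ℝ, ∀ N : ℕ, 1 ≤ N → ∀ π : Fin (2 * m) → Fin (2 * m),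
      Function.Involutive π → (∀ j, π j ≠ j) →
      ∀ ε C : Fin (2 * m) → ℤ,
      (∀ j, ε j = 1 ∨ ε j = -1) → (∃ j, j < π j ∧ ε j = 1) →
      ((Finset.univ.filter fun i : Fin (2 * m) → Fin N =>
          ∀ j, j < π j →
            (((i j : ℕ) + 1 : ℤ) - ((i (cycSucc j) : ℕ) + 1 : ℤ)) =
              ε j * (((i (π j) : ℕ) + 1 : ℤ) - ((i (cycSucc (π j)) : ℕ) + 1 : ℤ))
                + C j).card : ℝ)
        ≤ c * (N : ℝ) ^ m :=
  stmt8_general m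
end
end

section
/- Fix an integer n ≥ 0 and write P = N/2^n for N a positive multiple of 2^{n+1}. For each c ∈ {0,1,…,2^n − 1}, the number of triples (i,j,l) ∈ {1,…,N}^3 with i + cP ≤ N such that ψ_N(i,j) = ψ_N(j, i + cP) and ψ_N(i + cP, l) = ψ_N(l, i) equals ((2^n − c)/2^n)^3 N^3 + O_n(N^2); and for each c ∈ {1,…,2^n − 1}, the number of triples (i,j,l) ∈ {1,…,N}^3 with i + cP − 1 ≤ N such that ψ_N(i,j) = ψ_N(j, i + cP − 1) and ψ_N(i + cP − 1, l) = ψ_N(l, i) equals ((2^n c² − c³)/2^{3n}) N^3 + O_n(N^2), where the implied constants depend only on n. -/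
/-!
Write `P = N / 2^n = 2Q`. Then `ψ(a,b) = ψ(c,d)` holds iff `|a-b| ≡ |c-d|` or
`|a-b| + |c-d| ≡ -1 (mod P)`, so for `k = i + s` the admissible `j` are explicit. If `P ∣ s`,
every `j` outside the window `(i, i+s)` is admissible and inside it exactly those with
`Q ∣ j - i`, so each `i` admits exactly `N - s + s/Q` values of `j`. If `P ∣ s + 1`, the whole
window `(i, i+s]` is admissible and outside it only `j` in two residue classes mod `Q`, i.e.
`O(2^n)` further values. By symmetry of `ψ` the conditions on `j` and on `l` coincide, so the
count is `∑_{i ≤ N-s}` of the square of the number of admissible `j`, and expanding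
`(N-s)(N-s+2c)²` resp. `(N-s)(s + O(2^n))²` gives the two main terms with `O(N²)` errors.
-/

open Filter Finset

noncomputable section

/-- Number of triples `(i,j,l) ∈ {1,…,N}³` with `i + s ≤ N` such that
`ψ_N(i,j) = ψ_N(j,i+s)` and `ψ_N(i+s,l) = ψ_N(l,i)` (the adjacent fourth-moment
matchings with third index `k = i + s`). -/
def tripleCount (n N s : ℕ) : ℕ :=
  ((Finset.Icc 1 N ×ˢ Finset.Icc 1 N ×ˢ Finset.Icc 1 N).filter
    fun x : ℕ × ℕ × ℕ =>
      x.1 + s ≤ N ∧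
      psi n N x.1 x.2.1 = psi n N x.2.1 (x.1 + s) ∧
      psi n N (x.1 + s) x.2.2 = psi n N x.2.2 x.1).card

lemma dvd_add_add_one_iff_mod_add_mod {P u v : ℕ} (hP : 0 < P) :
    P ∣ u + v + 1 ↔ u % P + v % P + 1 = P := by
  have hu := Nat.mod_lt u hP
  have hv := Nat.mod_lt v hP
  have hsplit : u + v + 1 = P * (u / P + v / P) + (u % P + v % P + 1) := by
    have := Nat.div_add_mod u P
    have := Nat.div_add_mod v P
    rw [mul_add]; omega
  rw [hsplit, Nat.dvd_add_right (dvd_mul_right _ _)]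
  constructor
  · rintro ⟨k, hk⟩
    rcases k with _ | _ | k
    · omega
    · simpa using hk
    · nlinarith
  · intro h
    rw [h]

lemma min_mod_eq_min_mod_iff {P u v : ℕ} (hP : 0 < P) :
    min (u % P) (P - 1 - u % P) = min (v % P) (P - 1 - v % P) ↔
      (P : ℤ) ∣ (v : ℤ) - u ∨ P ∣ u + v + 1 := by
  have hu := Nat.mod_lt u hP
  have hv := Nat.mod_lt v hP
  rw [← Nat.modEq_iff_dvd, dvd_add_add_one_iff_mod_add_mod hP, Nat.ModEq]
  omega

lemma two_mul_not_dvd_one (Q : ℤ) : ¬ 2 * Q ∣ 1 := fun h => by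
  have := (dvd_mul_right 2 Q).trans h
  omega

lemma card_filter_prod_prod_eq_sum {α β : Type*} (s : Finset α) (t : Finset β) (p : α → Prop)
    (q r : α → β → Prop) [DecidablePred p] [∀ a, DecidablePred (q a)]
    [∀ a, DecidablePred (r a)] :
    #{x ∈ s ×ˢ t ×ˢ t | p x.1 ∧ q x.1 x.2.1 ∧ r x.1 x.2.2} =
      ∑ a ∈ s with p a, #{b ∈ t | q a b} * #{b ∈ t | r a b} := by
  simp only [card_filter, sum_product, sum_filter, sum_mul_sum, boole_mul, ite_and]
  refine sum_congr rfl fun a _ => ?_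
  split_ifs <;> simp

lemma card_filter_not_dvd_Ioc (s Q : ℕ) : #{x ∈ Ioc 0 s | ¬ Q ∣ x} = s - s / Q := by
  have h := card_filter_add_card_filter_not (s := Ioc 0 s) (Q ∣ ·)
  rw [Nat.Ioc_filter_dvd_card_eq_div, Nat.card_Ioc] at h
  omega

lemma card_filter_modEq_add_le (N m r t : ℕ) :
    #{j ∈ Icc 1 N | r ≡ j + t [MOD m]} ≤ N / m + 1 := by
  calc #{j ∈ Icc 1 N | r ≡ j + t [MOD m]} ≤ #(range (N / m + 1)) := by
        refine card_le_card_of_injOn (· / m) (fun j hj => ?_)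
          (fun j₁ hj₁ j₂ hj₂ hdiv => ?_)
        · simp only [coe_filter, mem_Icc, Set.mem_ofPred_eq] at hj
          simpa [Nat.lt_succ_iff] using Nat.div_le_div_right hj.1.2
        · simp only [coe_filter, mem_Icc, Set.mem_ofPred_eq] at hj₁ hj₂
          have hmod : j₁ % m = j₂ % m := (hj₁.2.symm.trans hj₂.2).add_right_cancel' t
          rw [← Nat.div_add_mod j₁ m, ← Nat.div_add_mod j₂ m, hmod]
          simp only at hdiv
          rw [hdiv]
    _ = N / m + 1 := card_range _

lemma psi_eq_psi_iff {n N P : ℕ} (hP : N / 2 ^ n = P) (hP0 : 0 < P) (a b c d : ℕ) :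
    psi n N a b = psi n N c d ↔
      (P : ℤ) ∣ |(c : ℤ) - d| - |(a : ℤ) - b| ∨
        (P : ℤ) ∣ |(a : ℤ) - b| + |(c : ℤ) - d| + 1 := by
  rw [psi, psi, hP, min_mod_eq_min_mod_iff hP0, ← Int.natCast_dvd_natCast (n := _ + _ + 1)]
  simp only [Nat.cast_add, Nat.cast_one, Int.natCast_natAbs]

lemma psi_comm (n N i j : ℕ) : psi n N i j = psi n N j i := by
  rw [psi, psi, ← Int.natAbs_neg, neg_sub]

def linkCount (n N i k : ℕ) : ℕ := #{j ∈ Icc 1 N | psi n N i j = psi n N j k}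

lemma tripleCount_eq_sum_sq (n N s : ℕ) :
    tripleCount n N s = ∑ i ∈ Icc 1 (N - s), linkCount n N i (i + s) ^ 2 := by
  have hIcc : ({i ∈ Icc 1 N | i + s ≤ N} : Finset ℕ) = Icc 1 (N - s) := by
    ext i; simp only [mem_filter, mem_Icc]; omega
  have hcomm (i l : ℕ) :
      (psi n N (i + s) l = psi n N l i) = (psi n N i l = psi n N l (i + s)) := by
    rw [psi_comm n N (i + s) l, psi_comm n N l i]
    exact propext eq_comm
  simp only [tripleCount, hcomm]
  rw [card_filter_prod_prod_eq_sum _ _ (fun i => i + s ≤ N)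
    (fun i j => psi n N i j = psi n N j (i + s)) (fun i j => psi n N i j = psi n N j (i + s)), hIcc]
  simp only [linkCount, sq]

section shift

variable {n N Q : ℕ} (hP : N / 2 ^ n = 2 * Q) (hQ : 0 < Q)
include hP hQ

lemma psi_eq_psi_add_iff_of_dvd {s : ℕ} (hs : 2 * Q ∣ s) (i j : ℕ) :
    psi n N i j = psi n N j (i + s) ↔ j ≤ i ∨ i + s ≤ j ∨ i ≡ j [MOD Q] := by
  replace hs : (2 * Q : ℤ) ∣ s := by exact_mod_cast hs
  rw [psi_eq_psi_iff hP (by omega), Nat.modEq_iff_dvd, abs_sub_comm (i : ℤ)]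
  push_cast
  rcases le_or_gt j i with hji | hij
  · rw [abs_of_nonpos (by omega), abs_of_nonpos (by omega), show
      -((j : ℤ) - (i + s)) - -((j : ℤ) - i) = s by ring]
    exact iff_of_true (Or.inl hs) (Or.inl hji)
  rcases le_or_gt (i + s) j with hsj | hjs
  · rw [abs_of_nonneg (by omega), abs_of_nonneg (by omega), show
      (j : ℤ) - (i + s) - (j - i) = -s by ring]
    exact iff_of_true (Or.inl (dvd_neg.mpr hs)) (Or.inr (Or.inl hsj))
  rw [abs_of_nonpos (by omega), abs_of_nonneg (by omega),
    show -((j : ℤ) - (i + s)) - (j - i) = s - 2 * (j - i) by ring,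
    show (j : ℤ) - i + -(j - (i + s)) + 1 = s + 1 by ring,
    dvd_sub_right hs, dvd_add_right hs, mul_dvd_mul_iff_left two_ne_zero]
  simp only [two_mul_not_dvd_one, or_false]
  omega

lemma psi_eq_psi_add_iff_of_dvd_add_one {s : ℕ} (hs : 2 * Q ∣ s + 1) (i j : ℕ) :
    psi n N i j = psi n N j (i + s) ↔
      (j ≤ i ∧ j ≡ i [MOD Q]) ∨ (i < j ∧ j ≤ i + s) ∨
        (i + s < j ∧ i ≡ j + 1 [MOD Q]) := by
  replace hs : (2 * Q : ℤ) ∣ s + 1 := by exact_mod_cast hs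
  have hs' : ¬ (2 * Q : ℤ) ∣ s := fun h => two_mul_not_dvd_one Q (by simpa using dvd_sub hs h)
  rw [psi_eq_psi_iff hP (by omega), Nat.modEq_iff_dvd, Nat.modEq_iff_dvd, abs_sub_comm (i : ℤ)]
  push_cast
  rcases le_or_gt j i with hji | hij
  · rw [abs_of_nonpos (by omega), abs_of_nonpos (by omega),
      show -((j : ℤ) - (i + s)) - -((j : ℤ) - i) = s by ring,
      show -((j : ℤ) - i) + -(j - (i + s)) + 1 = 2 * (i - j) + (s + 1) by ring,
      dvd_add_left hs, mul_dvd_mul_iff_left two_ne_zero]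
    simp only [hs', false_or]
    omega
  rcases le_or_gt j (i + s) with hjs | hsj
  · rw [abs_of_nonpos (by omega), abs_of_nonneg (by omega),
      show (j : ℤ) - i + -(j - (i + s)) + 1 = s + 1 by ring]
    exact iff_of_true (Or.inr hs) (Or.inr (Or.inl ⟨hij, hjs⟩))
  · rw [abs_of_nonneg (by omega), abs_of_nonneg (by omega),
      show (j : ℤ) - (i + s) - (j - i) = -s by ring,
      show (j : ℤ) - i + (j - (i + s)) + 1 = 2 * (j + 1 - i) - (s + 1) by ring,
      dvd_sub_left hs, mul_dvd_mul_iff_left two_ne_zero, dvd_neg]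
    simp only [hs', false_or]
    omega

lemma linkCount_of_dvd {s : ℕ} (hs : 2 * Q ∣ s) {i : ℕ} (hi : 1 ≤ i) (hiN : i + s ≤ N) :
    linkCount n N i (i + s) = N - s + s / Q := by
  have hQs : Q ∣ s := (dvd_mul_left Q 2).trans hs
  have hbad :
      #{j ∈ Icc 1 N | ¬ psi n N i j = psi n N j (i + s)} = #{x ∈ Ioc 0 s | ¬ Q ∣ x} := by
    refine card_nbij' (· - i) (i + ·) (fun j hj => ?_) (fun x hx => ?_) (fun j hj => ?_)
      (fun x _ => by simp)
    · simp only [coe_filter, mem_Icc, mem_Ioc, Set.mem_ofPred_eq,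
        psi_eq_psi_add_iff_of_dvd hP hQ hs] at hj ⊢
      rw [Nat.modEq_iff_dvd' (by omega)] at hj
      omega
    · simp only [coe_filter, mem_Icc, mem_Ioc, Set.mem_ofPred_eq,
        psi_eq_psi_add_iff_of_dvd hP hQ hs] at hx ⊢
      rw [Nat.modEq_iff_dvd' (by omega), Nat.add_sub_cancel_left]
      have hxs : x ≠ s := by rintro rfl; exact hx.2 hQs
      omega
    · simp only [coe_filter, mem_Icc, Set.mem_ofPred_eq, psi_eq_psi_add_iff_of_dvd hP hQ hs] at hj
      simp only
      omega
  have h := card_filter_add_card_filter_not (s := Icc 1 N)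
    (fun j => psi n N i j = psi n N j (i + s))
  rw [hbad, card_filter_not_dvd_Ioc, Nat.card_Icc] at h
  have := Nat.div_le_self s Q
  rw [linkCount]
  omega

lemma tripleCount_eq_of_dvd {s : ℕ} (hs : 2 * Q ∣ s) :
    tripleCount n N s = (N - s) * (N - s + s / Q) ^ 2 := by
  rw [tripleCount_eq_sum_sq, sum_congr rfl fun i hi => by
    obtain ⟨hi₁, hi₂⟩ := mem_Icc.mp hi
    rw [linkCount_of_dvd hP hQ hs hi₁ (by omega)]]
  simp

lemma le_linkCount_of_dvd_add_one {s : ℕ} (hs : 2 * Q ∣ s + 1) {i : ℕ} (hi : 1 ≤ i)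
    (hiN : i + s ≤ N) : s ≤ linkCount n N i (i + s) := by
  calc s = #(Ioc i (i + s)) := by simp
    _ ≤ linkCount n N i (i + s) := card_le_card fun j hj => by
      simp only [mem_Ioc] at hj
      simp only [mem_filter, mem_Icc, psi_eq_psi_add_iff_of_dvd_add_one hP hQ hs]
      omega

lemma linkCount_le_of_dvd_add_one {s : ℕ} (hs : 2 * Q ∣ s + 1) (i : ℕ) :
    linkCount n N i (i + s) ≤ s + 2 * (N / Q + 1) := by
  have hsub : {j ∈ Icc 1 N | psi n N i j = psi n N j (i + s)} ⊆
      Ioc i (i + s) ∪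
        ({j ∈ Icc 1 N | i ≡ j + 0 [MOD Q]} ∪ {j ∈ Icc 1 N | i ≡ j + 1 [MOD Q]}) := by
    intro j hj
    simp only [mem_filter, mem_Icc, psi_eq_psi_add_iff_of_dvd_add_one hP hQ hs] at hj
    simp only [mem_union, mem_filter, mem_Icc, mem_Ioc, add_zero]
    rcases hj with ⟨hj, ⟨-, hji⟩ | hmid | ⟨-, hji⟩⟩
    · exact Or.inr (Or.inl ⟨hj, hji.symm⟩)
    · omega
    · exact Or.inr (Or.inr ⟨hj, hji⟩)
  calc linkCount n N i (i + s) ≤ _ := card_le_card hsub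
    _ ≤ #(Ioc i (i + s)) + (#{j ∈ Icc 1 N | i ≡ j + 0 [MOD Q]} +
          #{j ∈ Icc 1 N | i ≡ j + 1 [MOD Q]}) :=
        (card_union_le _ _).trans (Nat.add_le_add_left (card_union_le _ _) _)
    _ ≤ s + ((N / Q + 1) + (N / Q + 1)) := by
        gcongr
        · simp
        · exact card_filter_modEq_add_le N Q i 0
        · exact card_filter_modEq_add_le N Q i 1
    _ = s + 2 * (N / Q + 1) := by ring

lemma tripleCount_bounds_of_dvd_add_one {s : ℕ} (hs : 2 * Q ∣ s + 1) :
    (N - s) * s ^ 2 ≤ tripleCount n N s ∧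
      tripleCount n N s ≤ (N - s) * (s + 2 * (N / Q + 1)) ^ 2 := by
  rw [tripleCount_eq_sum_sq]
  constructor
  · simpa using card_nsmul_le_sum (Icc 1 (N - s)) _ (s ^ 2) fun i hi => by
      have := mem_Icc.mp hi
      exact Nat.pow_le_pow_left (le_linkCount_of_dvd_add_one hP hQ hs this.1 (by omega)) 2
  · simpa using sum_le_card_nsmul (Icc 1 (N - s)) _ ((s + 2 * (N / Q + 1)) ^ 2) fun i _ =>
      Nat.pow_le_pow_left (linkCount_le_of_dvd_add_one hP hQ hs i) 2

end shift

lemma abs_mul_add_sq_sub_cube_le {A d D u : ℝ} (hA : 0 ≤ A) (hAu : A ≤ u) (hd : 0 ≤ d)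
    (hdD : d ≤ D) (hu : 1 ≤ u) : |A * (A + d) ^ 2 - A ^ 3| ≤ (2 * D + D ^ 2) * u ^ 2 := by
  have hD : 0 ≤ D := hd.trans hdD
  rw [abs_of_nonneg (by nlinarith [mul_nonneg hA hd])]
  have h₁ : 2 * d * A ^ 2 ≤ 2 * D * u ^ 2 := by gcongr
  have h₂ : d ^ 2 * A ≤ D ^ 2 * u ^ 2 := by gcongr; nlinarith
  nlinarith

lemma abs_sub_sq_mul_le_of_bounds {s u C T : ℝ} (hs : 0 ≤ s) (hsu : s + 1 ≤ u) (hC : 0 ≤ C)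
    (hlo : (u - s) * s ^ 2 ≤ T) (hhi : T ≤ (u - s) * (s + C) ^ 2) :
    |T - (s + 1) ^ 2 * (u - (s + 1))| ≤ 2 * (C + 1) ^ 2 * u ^ 2 := by
  have hus : 0 ≤ u - s := by linarith
  have hu : 1 ≤ u := by linarith
  have hCu : 1 * u ^ 2 ≤ (C + 1) ^ 2 * u ^ 2 := by gcongr; nlinarith
  rw [abs_le]
  constructor
  · have h : (u - s) * (2 * s + 1) ≤ u * (2 * u) := by
      apply mul_le_mul <;> linarith
    nlinarith
  · have h₁ : (u - s) * ((C - 1) * (2 * s + C + 1)) ≤ u * (C * (2 * u + C)) :=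
      calc (u - s) * ((C - 1) * (2 * s + C + 1)) ≤ (u - s) * (C * (2 * u + C)) :=
            mul_le_mul_of_nonneg_left (by nlinarith) hus
        _ ≤ u * (C * (2 * u + C)) := mul_le_mul_of_nonneg_right (by linarith) (by positivity)
    have h₂ : C ^ 2 * u ≤ C ^ 2 * u ^ 2 :=
      mul_le_mul_of_nonneg_left (by nlinarith) (sq_nonneg C)
    have h₃ : (s + 1) ^ 2 ≤ u ^ 2 := by gcongr
    nlinarith

section asymptotics

variable {n N Q : ℕ}

lemma div_two_pow_eq_two_mul (hNQ : N = 2 ^ (n + 1) * Q) : N / 2 ^ n = 2 * Q := by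
  rw [hNQ, pow_succ, mul_assoc, Nat.mul_div_cancel_left _ (by positivity)]

lemma cast_eq_two_pow_mul (hNQ : N = 2 ^ (n + 1) * Q) : (N : ℝ) = 2 ^ n * (2 * Q) := by
  rw [hNQ]; push_cast; ring

lemma mul_two_mul_le (hNQ : N = 2 ^ (n + 1) * Q) {c : ℕ} (hc : c < 2 ^ n) :
    c * (2 * Q) ≤ N := by
  rw [hNQ, pow_succ, mul_assoc]; gcongr

lemma abs_tripleCount_sub_le_of_dvd (hNQ : N = 2 ^ (n + 1) * Q) (hQ : 0 < Q) {c : ℕ}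
    (hc : c < 2 ^ n) :
    |(tripleCount n N (c * (2 * Q)) : ℝ) - ((2 ^ n - c) / 2 ^ n) ^ 3 * (N : ℝ) ^ 3| ≤
      2 * (2 * 2 ^ (n + 1) + 3) ^ 2 * (N : ℝ) ^ 2 := by
  have hdiv : c * (2 * Q) / Q = 2 * c := by
    rw [show c * (2 * Q) = 2 * c * Q by ring, Nat.mul_div_cancel _ hQ]
  have hA : ((N - c * (2 * Q) : ℕ) : ℝ) = ((2 ^ n - c) / 2 ^ n) * N := by
    rw [Nat.cast_sub (mul_two_mul_le hNQ hc), cast_eq_two_pow_mul hNQ]; push_cast; field_simp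
  have hcD : ((2 * c : ℕ) : ℝ) ≤ 2 ^ (n + 1) := by
    exact_mod_cast (by rw [pow_succ]; omega : 2 * c ≤ 2 ^ (n + 1))
  rw [tripleCount_eq_of_dvd (div_two_pow_eq_two_mul hNQ) hQ (dvd_mul_left _ _), hdiv, ← mul_pow,
    ← hA]
  push_cast at hcD ⊢
  have hN : 0 < N := hNQ ▸ Nat.mul_pos (by positivity) hQ
  refine (abs_mul_add_sq_sub_cube_le (u := N) (Nat.cast_nonneg _)
    (by exact_mod_cast Nat.sub_le _ _) (by positivity) hcD (by exact_mod_cast hN)).trans ?_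
  gcongr
  nlinarith [pow_pos (two_pos (α := ℝ)) (n + 1)]

lemma abs_tripleCount_sub_le_of_dvd_add_one (hNQ : N = 2 ^ (n + 1) * Q) (hQ : 0 < Q) {c : ℕ}
    (hc₁ : 1 ≤ c) (hc : c < 2 ^ n) :
    |(tripleCount n N (c * (2 * Q) - 1) : ℝ) -
        (2 ^ n * c ^ 2 - (c : ℝ) ^ 3) / 2 ^ (3 * n) * (N : ℝ) ^ 3| ≤
      2 * (2 * 2 ^ (n + 1) + 3) ^ 2 * (N : ℝ) ^ 2 := by
  obtain ⟨s, hs⟩ : ∃ s, s + 1 = c * (2 * Q) :=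
    ⟨_, Nat.sub_add_cancel (Nat.mul_pos hc₁ (by omega))⟩
  have hsN : s + 1 ≤ N := hs ▸ mul_two_mul_le hNQ hc
  obtain ⟨hlo, hhi⟩ :=
    tripleCount_bounds_of_dvd_add_one (div_two_pow_eq_two_mul hNQ) hQ (hs ▸ dvd_mul_left _ _)
  rw [hNQ, Nat.mul_div_cancel _ hQ, ← hNQ] at hhi
  have hsR : (s : ℝ) + 1 = c * (2 * Q) := by exact_mod_cast hs
  have htarget : (2 ^ n * c ^ 2 - c ^ 3) / 2 ^ (3 * n) * (N : ℝ) ^ 3 =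
      ((s : ℝ) + 1) ^ 2 * (N - ((s : ℝ) + 1)) := by
    rw [hsR, cast_eq_two_pow_mul hNQ]; field_simp; ring
  have hcast : ((N - s : ℕ) : ℝ) = N - s := Nat.cast_sub (by omega)
  have hloR : ((N : ℝ) - s) * s ^ 2 ≤ tripleCount n N s := by
    rw [← hcast]; exact_mod_cast hlo
  have hhiR : (tripleCount n N s : ℝ) ≤ ((N : ℝ) - s) * (s + 2 * (2 ^ (n + 1) + 1)) ^ 2 := by
    rw [← hcast]; exact_mod_cast hhi
  rw [← hs, Nat.add_sub_cancel, htarget]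
  refine (abs_sub_sq_mul_le_of_bounds (Nat.cast_nonneg _) (by exact_mod_cast hsN)
    (by positivity) hloR hhiR).trans (le_of_eq ?_)
  ring

end asymptotics

/-- for `k = i + cP` (`0 ≤ c < 2^n`) the number of good matchings is
`((2^n - c)/2^n)³ N³ + O_n(N²)`, and for `k = i + cP - 1` (`1 ≤ c < 2^n`) it is
`((2^n c² - c³)/2^{3n}) N³ + O_n(N²)`. -/
theorem stmt13 (n : ℕ) :
    ∃ K : ℝ, ∀ N : ℕ, 0 < N → 2 ^ (n + 1) ∣ N →
      (∀ c : ℕ, c < 2 ^ n →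
        |(tripleCount n N (c * (N / 2 ^ n)) : ℝ) -
            ((((2 : ℝ) ^ n - c) / 2 ^ n) ^ 3) * (N : ℝ) ^ 3| ≤ K * (N : ℝ) ^ 2) ∧
      (∀ c : ℕ, 1 ≤ c → c < 2 ^ n →
        |(tripleCount n N (c * (N / 2 ^ n) - 1) : ℝ) -
            ((((2 : ℝ) ^ n * c ^ 2 - (c : ℝ) ^ 3) / 2 ^ (3 * n))) * (N : ℝ) ^ 3|
          ≤ K * (N : ℝ) ^ 2) := by
  refine ⟨2 * (2 * 2 ^ (n + 1) + 3) ^ 2, fun N hN ⟨Q, hNQ⟩ => ?_⟩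
  have hQ : 0 < Q := Nat.pos_of_ne_zero fun hQ => by simp [hQ] at hNQ; omega
  rw [div_two_pow_eq_two_mul hNQ]
  exact ⟨fun c hc => abs_tripleCount_sub_le_of_dvd hNQ hQ hc,
    fun c hc₁ hc => abs_tripleCount_sub_le_of_dvd_add_one hNQ hQ hc₁ hc⟩
end
end

section
/- Fix integers n ≥ 0 and m ≥ 1. The variance of the empirical m-th moment tends to zero: lim_{N→∞} (E[X_{m,n;N}²] − (E[X_{m,n;N}])²) = 0, where the expectation is over b ∈ ℝ^ℕ with respect to p^{⊗ℕ} and the limit is taken over positive multiples N of 2^{n+1}. -/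
/-!
Expanding `Tr(A^m)` over closed circuits `i : Fin m → Fin N`, the variance is `N^{-(m+2)}` times
the sum over pairs of circuits of `E[∏ b over both] - E[∏ b over the first] · E[∏ b over the
second]`. By independence and mean zero, a pair contributes only if it is jointly matched (every
value of `ψ` occurs at least twice on its `2m` edges) and cross-matched (the two circuits share a
value), and every contribution is bounded by moments of `p`.

With `P = N / 2^n`, an edge increment `δ ∈ (-N, N)` is recovered from its value `ψ < P` and
one of `2^(n+2)` codes. A matched pair is thus determined, up to `O_{m,n}(1)` choices, by its two
starting points and the values of its at most `m` classes of equal-valued edges; when there are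
exactly `m` classes, the value of the class shared by the two circuits is forced, because the
increments of a circuit sum to zero. So there are `O(N^2 P^(m-1)) = O(N^(m+1))` contributing
pairs, and the variance is `O(1/N)`.
-/

open MeasureTheory Filter Finset

noncomputable section

lemma cycSucc_eq_finRotate {m : ℕ} (j : Fin m) : cycSucc j = finRotate m j := by
  have : NeZero m := ⟨j.pos.ne'⟩
  ext
  rw [finRotate_apply, Fin.val_add, Fin.val_one', Nat.add_mod_mod]
  rfl

namespace Matrix

variable {ι R : Type*} [Fintype ι] [DecidableEq ι] [CommSemiring R] (A : Matrix ι ι R)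

theorem pow_succ_apply_eq_sum_prod (k : ℕ) (x y : ι) :
    (A ^ (k + 1)) x y =
      ∑ i : Fin k → ι, ∏ j : Fin (k + 1),
        A (Fin.cons (α := fun _ ↦ ι) x i j) (Fin.snoc (α := fun _ ↦ ι) i y j) := by
  induction k generalizing x with
  | zero => simp [Fin.snoc]
  | succ k ih =>
    rw [pow_succ', mul_apply, ← (Fin.consEquiv fun _ ↦ ι).sum_comp, Fintype.sum_prod_type]
    refine sum_congr rfl fun z _ ↦ ?_
    dsimp only [Fin.consEquiv, Equiv.coe_fn_mk]
    simp only [ih, mul_sum, ← Fin.cons_snoc_eq_snoc_cons, Fin.prod_univ_succ (n := k + 1),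
      Fin.cons_zero, Fin.cons_succ]

theorem trace_pow_eq_sum_prod {m : ℕ} (hm : m ≠ 0) :
    (A ^ m).trace = ∑ i : Fin m → ι, ∏ j, A (i j) (i (cycSucc j)) := by
  obtain ⟨k, rfl⟩ := Nat.exists_eq_succ_of_ne_zero hm
  simp only [trace, diag, pow_succ_apply_eq_sum_prod, Fin.snoc_eq_cons_rotate,
    cycSucc_eq_finRotate]
  rw [← (Fin.consEquiv fun _ ↦ ι).sum_comp, Fintype.sum_prod_type]
  rfl

end Matrix

section Moments

variable {ι κ β : Type*}

def IsMatched (v : ι → β) : Prop := ∀ j, ∃ j' ≠ j, v j' = v j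

def IsCrossMatched (v : ι → β) (w : κ → β) : Prop := ∃ j j', v j = w j'

lemma not_isMatched_sumElim {v : ι → β} {w : κ → β} (h : ¬ IsMatched (Sum.elim v w)) :
    ¬ IsMatched v ∨ ¬ IsMatched w := by
  contrapose! h
  rintro (j | j)
  · obtain ⟨j', hne, hj'⟩ := h.1 j
    exact ⟨.inl j', by simpa using hne, hj'⟩
  · obtain ⟨j', hne, hj'⟩ := h.2 j
    exact ⟨.inr j', by simpa using hne, hj'⟩

variable [Fintype ι] [Fintype κ]

def momProd (p : Measure ℝ) (v : ι → ℕ) : ℝ :=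
  ∏ ℓ ∈ univ.image v, ∫ x, x ^ #{j | v j = ℓ} ∂p

variable {p : Measure ℝ}

lemma momProd_eq_zero_of_not_isMatched (hmean : ∫ x, x ∂p = 0) {v : ι → ℕ}
    (hv : ¬ IsMatched v) : momProd p v = 0 := by
  obtain ⟨j, hj⟩ : ∃ j, ∀ j', v j' = v j → j' = j := by
    simpa [IsMatched, not_imp_not] using hv
  have hsingle : #{j' | v j' = v j} = 1 :=
    card_eq_one.mpr ⟨j, by ext j'; simpa using ⟨hj j', fun h ↦ h ▸ rfl⟩⟩
  exact prod_eq_zero (mem_image_of_mem v (mem_univ j)) (by simpa [hsingle] using hmean)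

lemma momProd_sumElim_of_not_isCrossMatched {v : ι → ℕ} {w : κ → ℕ}
    (h : ¬ IsCrossMatched v w) :
    momProd p (Sum.elim v w) = momProd p v * momProd p w := by
  simp only [IsCrossMatched, not_exists] at h
  have himage : univ.image (Sum.elim v w) = univ.image v ∪ univ.image w := by
    ext ℓ
    simp
  have hdisj : Disjoint (univ.image v) (univ.image w) := by
    simp only [disjoint_left, mem_image, mem_univ, true_and, not_exists, forall_exists_index]
    rintro _ j rfl j' hj'
    exact h j j' hj'.symm
  have hcount (ℓ : ℕ) : #{e | Sum.elim v w e = ℓ} = #{j | v j = ℓ} + #{j | w j = ℓ} := by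
    rw [← card_disjSum]
    congr 1
    ext (j | j) <;> simp
  rw [momProd, himage, prod_union hdisj, momProd, momProd]
  congr 1 <;> refine prod_congr rfl fun ℓ hℓ ↦ ?_ <;> rw [hcount]
  · obtain ⟨j, -, rfl⟩ := mem_image.mp hℓ
    have : #{j' | w j' = v j} = 0 :=
      card_eq_zero.mpr (filter_eq_empty_iff.mpr fun j' _ hj' ↦ h j j' hj'.symm)
    rw [this, add_zero]
  · obtain ⟨j, -, rfl⟩ := mem_image.mp hℓ
    have : #{j' | v j' = w j} = 0 :=
      card_eq_zero.mpr (filter_eq_empty_iff.mpr fun j' _ hj' ↦ h j' j hj')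
    rw [this, zero_add]

lemma momProd_sumElim (hmean : ∫ x, x ∂p = 0) {v : ι → ℕ} {w : κ → ℕ}
    (h : ¬ (IsMatched (Sum.elim v w) ∧ IsCrossMatched v w)) :
    momProd p (Sum.elim v w) = momProd p v * momProd p w := by
  by_cases hm : IsMatched (Sum.elim v w)
  · exact momProd_sumElim_of_not_isCrossMatched fun hc ↦ h ⟨hm, hc⟩
  rw [momProd_eq_zero_of_not_isMatched hmean hm]
  rcases not_isMatched_sumElim hm with hv | hw
  · rw [momProd_eq_zero_of_not_isMatched hmean hv, zero_mul]
  · rw [momProd_eq_zero_of_not_isMatched hmean hw, mul_zero]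

def momBound (p : Measure ℝ) (K : ℕ) : ℝ := 1 + ∑ k ∈ range (K + 1), |∫ x, x ^ k ∂p|

lemma one_le_momBound (K : ℕ) : 1 ≤ momBound p K :=
  le_add_of_nonneg_right (sum_nonneg fun _ _ ↦ abs_nonneg _)

lemma abs_momProd_le {K : ℕ} (hK : Fintype.card ι ≤ K) (v : ι → ℕ) :
    |momProd p v| ≤ momBound p K ^ K := by
  have hmom {k : ℕ} (hk : k ≤ K) : |∫ x, x ^ k ∂p| ≤ momBound p K :=
    (single_le_sum (f := fun k ↦ |∫ x, x ^ k ∂p|) (fun _ _ ↦ abs_nonneg _)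
      (mem_range.mpr (Nat.lt_succ_of_le hk))).trans (le_add_of_nonneg_left zero_le_one)
  rw [momProd, abs_prod]
  calc ∏ ℓ ∈ univ.image v, |∫ x, x ^ #{j | v j = ℓ} ∂p|
      ≤ ∏ _ℓ ∈ univ.image v, momBound p K :=
        prod_le_prod (fun _ _ ↦ abs_nonneg _)
          fun ℓ _ ↦ hmom ((card_filter_le _ _).trans hK)
    _ = momBound p K ^ #(univ.image v) := prod_const _
    _ ≤ momBound p K ^ K :=
        pow_le_pow_right₀ (one_le_momBound K) ((card_image_le).trans hK)

end Moments

section ProductMeasure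

variable {ι : Type*} [Fintype ι] {p : Measure ℝ} [IsProbabilityMeasure p]
  {μ : Measure (ℕ → ℝ)}

lemma map_restrict_eq_pi
    (hprod : ∀ (s : Finset ℕ) (A : ℕ → Set ℝ), (∀ i, MeasurableSet (A i)) →
      μ {b | ∀ i ∈ s, b i ∈ A i} = ∏ i ∈ s, p (A i))
    (s : Finset ℕ) : μ.map s.restrict = Measure.pi fun _ : s ↦ p := by
  refine (Measure.pi_eq fun A hA ↦ ?_).symm
  set A' : ℕ → Set ℝ := fun i ↦ if h : i ∈ s then A ⟨i, h⟩ else Set.univ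
  have hA' (i : ℕ) : MeasurableSet (A' i) := by
    unfold A'; split_ifs
    exacts [hA _, MeasurableSet.univ]
  have hpre : s.restrict ⁻¹' Set.univ.pi A = {b | ∀ i ∈ s, b i ∈ A' i} := by
    ext b
    simp +contextual [A', Finset.restrict]
  rw [Measure.map_apply (s.measurable_restrict) (.univ_pi hA), hpre, hprod s A' hA',
    ← prod_attach, univ_eq_attach]
  exact prod_congr rfl fun i _ ↦ by simp [A']

lemma prod_apply_eq_prod_pow (v : ι → ℕ) (b : ℕ → ℝ) :
    ∏ j, b (v j) = ∏ ℓ : univ.image v, b ℓ ^ #{j | v j = ℓ} := by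
  rw [prod_comp b v, ← prod_attach, univ_eq_attach]

variable (hμ : ∀ s : Finset ℕ, μ.map s.restrict = Measure.pi fun _ : s ↦ p)
include hμ

lemma integrable_prod_apply (hfin : ∀ k : ℕ, Integrable (fun x ↦ x ^ k) p) (v : ι → ℕ) :
    Integrable (fun b ↦ ∏ j, b (v j)) μ := by
  simp_rw [prod_apply_eq_prod_pow v]
  set g : (univ.image v → ℝ) → ℝ := fun x ↦ ∏ ℓ, x ℓ ^ #{j | v j = ℓ}
  have hg : Measurable g :=
    Finset.measurable_prod _ fun ℓ _ ↦ (measurable_pi_apply ℓ).pow_const _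
  have hint : Integrable g (μ.map (univ.image v).restrict) := by
    rw [hμ]
    exact Integrable.fintype_prod fun ℓ ↦ hfin _
  exact (integrable_map_measure hg.aestronglyMeasurable
    (univ.image v).measurable_restrict.aemeasurable).mp hint

lemma integral_prod_apply (v : ι → ℕ) : ∫ b, ∏ j, b (v j) ∂μ = momProd p v := by
  simp_rw [prod_apply_eq_prod_pow v]
  have hg : Measurable fun x : univ.image v → ℝ ↦ ∏ ℓ, x ℓ ^ #{j | v j = ℓ} :=
    Finset.measurable_prod _ fun ℓ _ ↦ (measurable_pi_apply ℓ).pow_const _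
  have hmap := integral_map (μ := μ) (univ.image v).measurable_restrict.aemeasurable
    hg.aestronglyMeasurable
  rw [hμ, integral_fintype_prod_eq_prod
    fun (ℓ : univ.image v) (x : ℝ) ↦ x ^ #{j | v j = ℓ}] at hmap
  rw [momProd, ← prod_attach, univ_eq_attach]
  exact hmap.symm

end ProductMeasure

section Increments

variable {m N P : ℕ}

def link (P : ℕ) (δ : ℤ) : ℕ := min (δ.natAbs % P) (P - 1 - δ.natAbs % P)

def incr (i : Fin m → Fin N) (j : Fin m) : ℤ := (i (cycSucc j) : ℤ) - i j

lemma edgePsi_eq_link (n : ℕ) (i : Fin m → Fin N) (j : Fin m) :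
    edgePsi n N i j = link (N / 2 ^ n) (incr i j) := by
  rw [edgePsi, psi, link, incr, ← Int.natAbs_neg]
  push_cast
  ring_nf

lemma sum_incr (i : Fin m → Fin N) : ∑ j, incr i j = 0 := by
  simp only [incr, sum_sub_distrib, cycSucc_eq_finRotate,
    Equiv.sum_comp (finRotate m) fun j ↦ (i j : ℤ), sub_self]

lemma natAbs_incr_lt (i : Fin m → Fin N) (j : Fin m) : (incr i j).natAbs < N := by
  have := (i j).isLt
  have := (i (cycSucc j)).isLt
  rw [incr]
  omega

lemma eq_of_incr_eq (hm : 0 < m) {i i' : Fin m → Fin N} (h0 : i ⟨0, hm⟩ = i' ⟨0, hm⟩)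
    (h : incr i = incr i') : i = i' := by
  suffices ∀ k (hk : k < m), i ⟨k, hk⟩ = i' ⟨k, hk⟩ from funext fun j ↦ this j j.isLt
  intro k
  induction k with
  | zero => exact fun _ ↦ h0
  | succ k ih =>
    intro hk
    have hsucc : cycSucc ⟨k, (Nat.lt_succ_self k).trans hk⟩ = ⟨k + 1, hk⟩ :=
      Fin.ext (Nat.mod_eq_of_lt hk)
    have hincr := congrFun h ⟨k, (Nat.lt_succ_self k).trans hk⟩
    rw [incr, incr, hsucc, ih] at hincr
    exact Fin.ext (by omega)

lemma incr_eq_of_forall_ne {i i' : Fin m → Fin N} {j₀ : Fin m}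
    (h : ∀ j ≠ j₀, incr i j = incr i' j) : incr i j₀ = incr i' j₀ := by
  have hsum := (add_sum_erase univ (incr i) (mem_univ j₀)).trans (sum_incr i)
  rw [← (add_sum_erase univ (incr i') (mem_univ j₀)).trans (sum_incr i'),
    sum_congr rfl fun j hj ↦ h j (ne_of_mem_erase hj)] at hsum
  exact add_right_cancel hsum

/-- Since `|δ| % P` is `link P δ` or `P - 1 - link P δ`, the sign of `δ`, this branch and
`|δ| / P` recover `δ` from `link P δ`. -/
def linkCode (P : ℕ) (δ : ℤ) : Bool × Bool × ℕ :=
  (decide (0 ≤ δ), decide (link P δ = δ.natAbs % P), δ.natAbs / P)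

lemma eq_of_link_eq_of_linkCode_eq (hP : 0 < P) {δ δ' : ℤ} (h : link P δ = link P δ')
    (hc : linkCode P δ = linkCode P δ') : δ = δ' := by
  simp only [linkCode, Prod.mk.injEq, decide_eq_decide] at hc
  obtain ⟨hsign, hbranch, hdiv⟩ := hc
  have hmod : δ.natAbs % P = δ'.natAbs % P := by
    have := Nat.mod_lt δ.natAbs hP
    have := Nat.mod_lt δ'.natAbs hP
    unfold link at h hbranch
    omega
  have habs : δ.natAbs = δ'.natAbs := by
    rw [← Nat.div_add_mod δ.natAbs P, ← Nat.div_add_mod δ'.natAbs P, hdiv, hmod]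
  omega

lemma linkCode_mem {n : ℕ} {δ : ℤ} (hδ : δ.natAbs < 2 ^ n * P) :
    linkCode P δ ∈ (univ ×ˢ univ ×ˢ range (2 ^ n) : Finset (Bool × Bool × ℕ)) := by
  simp only [linkCode, mem_product, mem_univ, mem_range, true_and]
  exact Nat.div_lt_of_lt_mul (mul_comm (2 ^ n) P ▸ hδ)

end Increments

section Fibers

variable {α β : Type*}

/-- As a self-map of a finite type, `classRep v` encodes the partition of `α` into the fibers
of `v`. -/
def classRep (v : α → β) (a : α) : α := @Classical.epsilon α ⟨a⟩ fun a' ↦ v a' = v a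

lemma apply_classRep (v : α → β) (a : α) : v (classRep v a) = v a :=
  @Classical.epsilon_spec α (fun a' ↦ v a' = v a) ⟨a, rfl⟩

lemma classRep_eq_classRep_iff {v : α → β} {a a' : α} :
    classRep v a = classRep v a' ↔ v a = v a' := by
  refine ⟨fun h ↦ ?_, fun h ↦ by simp only [classRep, h]⟩
  rw [← apply_classRep v a, h, apply_classRep v a']

variable [Fintype α] [DecidableEq β]

lemma card_image_classRep [DecidableEq α] (v : α → β) :
    #(univ.image (classRep v)) = #(univ.image v) := by
  have hv : univ.image v = (univ.image (classRep v)).image v := by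
    rw [image_image]
    exact image_congr fun a _ ↦ (apply_classRep v a).symm
  rw [hv, card_image_of_injOn (s := univ.image (classRep v)) (f := v)]
  intro x hx y hy h
  obtain ⟨a, -, rfl⟩ := mem_image.mp (mem_coe.mp hx)
  obtain ⟨a', -, rfl⟩ := mem_image.mp (mem_coe.mp hy)
  rwa [apply_classRep v a, apply_classRep v a', ← classRep_eq_classRep_iff] at h

lemma two_le_card_fiber {v : α → β} (hv : IsMatched v) (a : α) :
    2 ≤ #{a' | v a' = v a} := by
  classical
  obtain ⟨a', hne, ha'⟩ := hv a
  calc 2 = #{a', a} := (card_pair hne).symm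
    _ ≤ #{a' | v a' = v a} := card_le_card (by simp [insert_subset_iff, ha'])

lemma two_mul_card_image_le {v : α → β} (hv : IsMatched v) :
    2 * #(univ.image v) ≤ Fintype.card α := by
  rw [← card_univ, card_eq_sum_card_image v univ, mul_comm, ← smul_eq_mul]
  refine card_nsmul_le_sum _ _ _ fun b hb ↦ ?_
  obtain ⟨a, -, rfl⟩ := mem_image.mp hb
  exact two_le_card_fiber hv a

lemma card_fiber_eq_two {v : α → β} (hv : IsMatched v)
    (hcard : Fintype.card α ≤ 2 * #(univ.image v)) (a : α) : #{a' | v a' = v a} = 2 := by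
  have hsum : ∑ b ∈ univ.image v, #{a' | v a' = b} = ∑ _b ∈ univ.image v, 2 := by
    refine le_antisymm ?_ (sum_le_sum fun b hb ↦ ?_)
    · rw [← card_eq_sum_card_image v univ, card_univ, sum_const, smul_eq_mul, mul_comm]
      exact hcard
    · obtain ⟨a, -, rfl⟩ := mem_image.mp hb
      exact two_le_card_fiber hv a
  exact ((sum_eq_sum_iff_of_le fun b hb ↦ by
    obtain ⟨a, -, rfl⟩ := mem_image.mp hb
    exact two_le_card_fiber hv a).mp hsum.symm (v a) (mem_image_of_mem v (mem_univ a))).symm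

lemma eq_or_eq_of_card_fiber_eq_two {v : α → β} {a b x : α}
    (h2 : #{a' | v a' = v a} = 2) (hne : b ≠ a) (hb : v b = v a) (hx : v x = v a) :
    x = a ∨ x = b := by
  classical
  have hpair : ({a, b} : Finset α) = ({a' | v a' = v a} : Finset α) :=
    eq_of_subset_of_card_le (by simp [insert_subset_iff, hb])
      (h2.trans (card_pair hne.symm).symm).le
  have hx' : x ∈ ({a' | v a' = v a} : Finset α) := by simpa using hx
  simpa [← hpair] using hx'

end Fibers

section Counting

variable {n m N P : ℕ}

def pairIncr (q : (Fin m → Fin N) × (Fin m → Fin N)) : Fin m ⊕ Fin m → ℤ :=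
  Sum.elim (incr q.1) (incr q.2)

def pairPsi (n N : ℕ) (q : (Fin m → Fin N) × (Fin m → Fin N)) : Fin m ⊕ Fin m → ℕ :=
  Sum.elim (edgePsi n N q.1) (edgePsi n N q.2)

lemma pairPsi_eq_link (hN : N = 2 ^ n * P) (q : (Fin m → Fin N) × (Fin m → Fin N))
    (e : Fin m ⊕ Fin m) : pairPsi n N q e = link P (pairIncr q e) := by
  have hP : N / 2 ^ n = P := by rw [hN]; exact Nat.mul_div_cancel_left _ (by positivity)
  cases e <;> simp [pairPsi, pairIncr, edgePsi_eq_link, hP]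

open Classical in
def matchedPairs (n N m : ℕ) : Finset ((Fin m → Fin N) × (Fin m → Fin N)) :=
  {q | IsMatched (pairPsi n N q) ∧ IsCrossMatched (edgePsi n N q.1) (edgePsi n N q.2)}

lemma mem_matchedPairs {q : (Fin m → Fin N) × (Fin m → Fin N)} :
    q ∈ matchedPairs n N m ↔
      IsMatched (pairPsi n N q) ∧ IsCrossMatched (edgePsi n N q.1) (edgePsi n N q.2) := by
  simp [matchedPairs]

def crossIdx (hm : 0 < m) (c : Fin m ⊕ Fin m → Fin m ⊕ Fin m) : Fin m :=
  @Classical.epsilon _ ⟨⟨0, hm⟩⟩ fun j ↦ ∃ j', c (.inl j) = c (.inr j')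

/-- The class representatives whose values must be recorded: with exactly `m` classes, the value
of the class of `.inl (crossIdx hm c)` is forced (`pairPsi_eq_of_classRep_eq`). -/
def freeReps (hm : 0 < m) (c : Fin m ⊕ Fin m → Fin m ⊕ Fin m) : Finset (Fin m ⊕ Fin m) :=
  if #(univ.image c) = m then (univ.image c).erase (c (.inl (crossIdx hm c)))
  else univ.image c

lemma card_freeReps_le (hm : 0 < m) {c : Fin m ⊕ Fin m → Fin m ⊕ Fin m}
    (hc : #(univ.image c) ≤ m) : #(freeReps hm c) ≤ m - 1 := by
  unfold freeReps
  split_ifs with h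
  · rw [card_erase_of_mem (mem_image_of_mem c (mem_univ _)), h]
  · omega

section Fiber

variable (hm : 0 < m) {q : (Fin m → Fin N) × (Fin m → Fin N)} (hq : q ∈ matchedPairs n N m)
  {c : Fin m ⊕ Fin m → Fin m ⊕ Fin m} (hc : classRep (pairPsi n N q) = c)
include hq hc

lemma card_image_le_of_mem_matchedPairs : #(univ.image c) ≤ m := by
  have := two_mul_card_image_le (mem_matchedPairs.mp hq).1
  rw [← hc, card_image_classRep]
  simp only [Fintype.card_sum, Fintype.card_fin] at this
  omega

lemma classRep_inl_ne_crossIdx (hcard : #(univ.image c) = m) {j : Fin m}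
    (hj : j ≠ crossIdx hm c) : c (.inl j) ≠ c (.inl (crossIdx hm c)) := by
  subst hc
  obtain ⟨hmatch, j₁, j₁', hj₁⟩ := mem_matchedPairs.mp hq
  set c := classRep (pairPsi n N q)
  obtain ⟨j', hj'⟩ : ∃ j', c (.inl (crossIdx hm c)) = c (.inr j') :=
    @Classical.epsilon_spec _ (fun j ↦ ∃ j', c (.inl j) = c (.inr j'))
      ⟨j₁, j₁', classRep_eq_classRep_iff.mpr hj₁⟩
  rw [classRep_eq_classRep_iff] at hj'
  rw [ne_eq, classRep_eq_classRep_iff]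
  have h2 := card_fiber_eq_two hmatch (by
    rw [← card_image_classRep, hcard, Fintype.card_sum, Fintype.card_fin]; omega)
    (.inl (crossIdx hm c))
  intro h
  rcases eq_or_eq_of_card_fiber_eq_two h2 (by simp) hj'.symm h with h | h
  · exact hj (Sum.inl_injective h)
  · exact Sum.inl_ne_inr h

variable (hP : 0 < P) (hN : N = 2 ^ n * P) {q' : (Fin m → Fin N) × (Fin m → Fin N)}
  (hc' : classRep (pairPsi n N q') = c)
  (hcode : ∀ e, linkCode P (pairIncr q e) = linkCode P (pairIncr q' e))
  (hfree : ∀ ℓ ∈ freeReps hm c, pairPsi n N q ℓ = pairPsi n N q' ℓ)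
include hP hN hc' hcode hfree

lemma pairPsi_eq_of_classRep_eq : pairPsi n N q = pairPsi n N q' := by
  have hrep (e) (he : c e ∈ freeReps hm c) : pairPsi n N q e = pairPsi n N q' e := by
    rw [← apply_classRep (pairPsi n N q) e, hc, hfree _ he, ← hc',
      apply_classRep (pairPsi n N q') e]
  by_cases hcard : #(univ.image c) = m
  swap
  · exact funext fun e ↦ hrep e (by simp [freeReps, hcard])
  set j₀ := crossIdx hm c
  -- Every class has two elements, so `.inl j₀` is the only edge of the first circuit in its
  -- class; its increment, hence its value, is forced by the others since increments sum to 0.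
  have hincr (j) (hj : j ≠ j₀) : incr q.1 j = incr q'.1 j := by
    refine eq_of_link_eq_of_linkCode_eq hP ?_ (hcode (.inl j))
    refine (pairPsi_eq_link hN q (.inl j)).symm.trans
      ((hrep _ ?_).trans (pairPsi_eq_link hN q' (.inl j)))
    simp [freeReps, hcard, classRep_inl_ne_crossIdx hm hq hc hcard hj]
  have hj₀ : pairPsi n N q (.inl j₀) = pairPsi n N q' (.inl j₀) := by
    rw [pairPsi_eq_link hN, pairPsi_eq_link hN]
    exact congrArg (link P) (incr_eq_of_forall_ne hincr)
  funext e
  by_cases he : c e = c (.inl j₀)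
  · have h : pairPsi n N q e = pairPsi n N q (.inl j₀) :=
      classRep_eq_classRep_iff.mp (by rw [hc]; exact he)
    have h' : pairPsi n N q' e = pairPsi n N q' (.inl j₀) :=
      classRep_eq_classRep_iff.mp (by rw [hc']; exact he)
    rw [h, h', hj₀]
  · refine hrep e ?_
    rw [freeReps, if_pos hcard]
    exact mem_erase.mpr ⟨he, mem_image_of_mem c (mem_univ e)⟩

lemma eq_of_classRep_eq (h₁ : q.1 ⟨0, hm⟩ = q'.1 ⟨0, hm⟩)
    (h₂ : q.2 ⟨0, hm⟩ = q'.2 ⟨0, hm⟩) : q = q' := by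
  have hV := pairPsi_eq_of_classRep_eq hm hq hc hP hN hc' hcode hfree
  have hI (e) : pairIncr q e = pairIncr q' e :=
    eq_of_link_eq_of_linkCode_eq hP (by rw [← pairPsi_eq_link hN, ← pairPsi_eq_link hN, hV])
      (hcode e)
  exact Prod.ext (eq_of_incr_eq hm h₁ (funext fun j ↦ hI (.inl j)))
    (eq_of_incr_eq hm h₂ (funext fun j ↦ hI (.inr j)))

end Fiber

lemma card_filter_classRep_le (hm : 0 < m) (hP : 0 < P) (hN : N = 2 ^ n * P)
    (c : Fin m ⊕ Fin m → Fin m ⊕ Fin m) :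
    #{q ∈ matchedPairs n N m | classRep (pairPsi n N q) = c} ≤
      (4 * 2 ^ n) ^ (m + m) * (N ^ 2 * P ^ (m - 1)) := by
  set fiber := {q ∈ matchedPairs n N m | classRep (pairPsi n N q) = c}
  rcases fiber.eq_empty_or_nonempty with hempty | ⟨q₀, hq₀⟩
  · simp [hempty]
  obtain ⟨hq₀, hc₀⟩ := mem_filter.mp hq₀
  have hfree := card_freeReps_le hm (card_image_le_of_mem_matchedPairs hq₀ hc₀)
  let code (q : (Fin m → Fin N) × (Fin m → Fin N)) :=
    ((fun e ↦ linkCode P (pairIncr q e)), (q.1 ⟨0, hm⟩, q.2 ⟨0, hm⟩),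
      fun ℓ : freeReps hm c ↦ pairPsi n N q ℓ)
  let codes := Fintype.piFinset (fun _ : Fin m ⊕ Fin m ↦
      (univ ×ˢ univ ×ˢ range (2 ^ n) : Finset (Bool × Bool × ℕ))) ×ˢ
    (univ : Finset (Fin N × Fin N)) ×ˢ Fintype.piFinset fun _ : freeReps hm c ↦ range P
  have hmaps : ∀ q ∈ fiber, code q ∈ codes := fun q _ ↦ by
    refine mem_product.mpr ⟨Fintype.mem_piFinset.mpr fun e ↦ linkCode_mem ?_,
      mem_product.mpr ⟨mem_univ _, Fintype.mem_piFinset.mpr fun ℓ ↦ mem_range.mpr ?_⟩⟩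
    · rw [← hN]
      cases e <;> exact natAbs_incr_lt _ _
    · rw [show (code q).2.2 ℓ = pairPsi n N q ℓ from rfl, pairPsi_eq_link hN]
      exact (min_le_left _ _).trans_lt (Nat.mod_lt _ hP)
  have hinj : Set.InjOn code fiber := by
    intro q hq q' hq' hqq'
    obtain ⟨hq, hc⟩ := mem_filter.mp hq
    simp only [code, Prod.mk.injEq] at hqq'
    obtain ⟨hcode, ⟨h₁, h₂⟩, hval⟩ := hqq'
    exact eq_of_classRep_eq hm hq hc hP hN (mem_filter.mp hq').2 (congrFun hcode)
      (fun ℓ hℓ ↦ congrFun hval ⟨ℓ, hℓ⟩) h₁ h₂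
  calc #fiber ≤ #codes := card_le_card_of_injOn code hmaps hinj
    _ = (4 * 2 ^ n) ^ (m + m) * (N ^ 2 * P ^ #(freeReps hm c)) := by
      simp [codes, Fintype.card_piFinset, card_product]
      ring
    _ ≤ (4 * 2 ^ n) ^ (m + m) * (N ^ 2 * P ^ (m - 1)) := by gcongr

theorem card_matchedPairs_le (hm : 0 < m) (hP : 0 < P) (hN : N = 2 ^ n * P) :
    #(matchedPairs n N m) ≤
      (m + m) ^ (m + m) * ((4 * 2 ^ n) ^ (m + m) * (N ^ 2 * P ^ (m - 1))) := by
  rw [card_eq_sum_card_fiberwise fun q _ ↦ mem_univ (classRep (pairPsi n N q))]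
  calc _ ≤ ∑ _c : Fin m ⊕ Fin m → Fin m ⊕ Fin m,
          (4 * 2 ^ n) ^ (m + m) * (N ^ 2 * P ^ (m - 1)) :=
        sum_le_sum fun c _ ↦ card_filter_classRep_le hm hP hN c
    _ = _ := by simp

end Counting

section Variance

variable {n m N P : ℕ} {p : Measure ℝ} [IsProbabilityMeasure p] {μ : Measure (ℕ → ℝ)}

lemma empMoment_eq_sum (hm : m ≠ 0) (b : ℕ → ℝ) :
    empMoment n N m b =
      ((N : ℝ) ^ ((m : ℝ) / 2 + 1))⁻¹ *
        ∑ i : Fin m → Fin N, ∏ j, b (edgePsi n N i j) := by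
  rw [empMoment, Matrix.trace_pow_eq_sum_prod _ hm]
  rfl

lemma empMoment_sq_eq_sum (hm : m ≠ 0) (b : ℕ → ℝ) :
    empMoment n N m b ^ 2 =
      ((N : ℝ) ^ ((m : ℝ) / 2 + 1))⁻¹ ^ 2 *
        ∑ q : (Fin m → Fin N) × (Fin m → Fin N), ∏ e, b (pairPsi n N q e) := by
  rw [empMoment_eq_sum hm, mul_pow, sq (∑ i, _), Fintype.sum_mul_sum, ← Fintype.sum_prod_type']
  simp only [pairPsi, Fintype.prod_sum_type, Sum.elim_inl, Sum.elim_inr]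

variable (hμ : ∀ s : Finset ℕ, μ.map s.restrict = Measure.pi fun _ : s ↦ p)
  (hfin : ∀ k : ℕ, Integrable (fun x ↦ x ^ k) p)
include hμ hfin

lemma variance_empMoment_eq (hm : m ≠ 0) :
    ∫ b, empMoment n N m b ^ 2 ∂μ - (∫ b, empMoment n N m b ∂μ) ^ 2 =
      ((N : ℝ) ^ ((m : ℝ) / 2 + 1))⁻¹ ^ 2 * ∑ q : (Fin m → Fin N) × (Fin m → Fin N),
        (momProd p (pairPsi n N q) -
          momProd p (edgePsi n N q.1) * momProd p (edgePsi n N q.2)) := by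
  simp_rw [empMoment_sq_eq_sum hm, empMoment_eq_sum hm]
  rw [integral_const_mul, integral_const_mul,
    integral_finsetSum _ fun q _ ↦ integrable_prod_apply hμ hfin _,
    integral_finsetSum _ fun i _ ↦ integrable_prod_apply hμ hfin _, mul_pow, sq (∑ i, _),
    Fintype.sum_mul_sum, ← Fintype.sum_prod_type', ← mul_sub, ← sum_sub_distrib]
  simp only [integral_prod_apply hμ]

lemma abs_variance_empMoment_le (hmean : ∫ x, x ∂p = 0) (hm : m ≠ 0) :
    |∫ b, empMoment n N m b ^ 2 ∂μ - (∫ b, empMoment n N m b ∂μ) ^ 2| ≤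
      ((N : ℝ) ^ ((m : ℝ) / 2 + 1))⁻¹ ^ 2 *
        (#(matchedPairs n N m) * (2 * (momBound p (m + m) ^ (m + m)) ^ 2)) := by
  set B := momBound p (m + m) ^ (m + m)
  have hB {ι : Type} [Fintype ι] (v : ι → ℕ) (hv : Fintype.card ι ≤ m + m) :
      |momProd p v| ≤ B :=
    abs_momProd_le hv v
  have hterm (q : (Fin m → Fin N) × (Fin m → Fin N)) :
      |momProd p (pairPsi n N q) - momProd p (edgePsi n N q.1) * momProd p (edgePsi n N q.2)|
        ≤ 2 * B ^ 2 := by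
    have h1 : 1 ≤ B := one_le_pow₀ (one_le_momBound _)
    have hpair := hB (pairPsi n N q) (by simp)
    have hq1 := hB (edgePsi n N q.1) (by simp)
    have hq2 := hB (edgePsi n N q.2) (by simp)
    rw [abs_le] at hpair hq1 hq2 ⊢
    constructor <;> nlinarith
  rw [variance_empMoment_eq hμ hfin hm, abs_mul, abs_of_nonneg (by positivity)]
  gcongr
  calc _ = |∑ q ∈ matchedPairs n N m, (momProd p (pairPsi n N q) -
          momProd p (edgePsi n N q.1) * momProd p (edgePsi n N q.2))| :=
        congrArg abs (sum_subset (subset_univ _) fun q _ hq ↦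
          sub_eq_zero.mpr (momProd_sumElim hmean (mem_matchedPairs.not.mp hq))).symm
    _ ≤ ∑ q ∈ matchedPairs n N m, |momProd p (pairPsi n N q) -
          momProd p (edgePsi n N q.1) * momProd p (edgePsi n N q.2)| := abs_sum_le_sum_abs _ _
    _ ≤ ∑ _q ∈ matchedPairs n N m, 2 * B ^ 2 := sum_le_sum fun q _ ↦ hterm q
    _ = _ := by rw [sum_const, nsmul_eq_mul]

end Variance

lemma abs_variance_empMoment_le_div {n m N P : ℕ} {p : Measure ℝ} [IsProbabilityMeasure p]
    {μ : Measure (ℕ → ℝ)} (hμ : ∀ s : Finset ℕ, μ.map s.restrict = Measure.pi fun _ : s ↦ p)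
    (hfin : ∀ k : ℕ, Integrable (fun x ↦ x ^ k) p) (hmean : ∫ x, x ∂p = 0) (hm : m ≠ 0)
    (hP : 0 < P) (hN : N = 2 ^ n * P) :
    |∫ b, empMoment n N m b ^ 2 ∂μ - (∫ b, empMoment n N m b ∂μ) ^ 2| ≤
      (m + m) ^ (m + m) * (4 * 2 ^ n) ^ (m + m) * (2 * (momBound p (m + m) ^ (m + m)) ^ 2) /
        N := by
  set K := (m + m) ^ (m + m) * (4 * 2 ^ n) ^ (m + m)
  set D := 2 * (momBound p (m + m) ^ (m + m)) ^ 2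
  have hN0 : (0 : ℝ) < N := by rw [hN]; positivity
  have hnorm : ((N : ℝ) ^ ((m : ℝ) / 2 + 1))⁻¹ ^ 2 = ((N : ℝ) ^ (m + 2))⁻¹ := by
    rw [inv_pow, ← Real.rpow_mul_natCast hN0.le, ← Real.rpow_natCast]
    push_cast
    ring_nf
  have hcard : #(matchedPairs n N m) ≤ K * N ^ (m + 1) := by
    have hPN : P ≤ N := hN ▸ Nat.le_mul_of_pos_left P (by positivity)
    calc #(matchedPairs n N m) ≤ K * (N ^ 2 * P ^ (m - 1)) :=
          (card_matchedPairs_le (Nat.pos_of_ne_zero hm) hP hN).trans_eq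
            (mul_assoc _ _ _).symm
      _ ≤ K * (N ^ 2 * N ^ (m - 1)) := by gcongr
      _ = K * N ^ (m + 1) := by rw [← pow_add]; congr 2; omega
  calc _ ≤ ((N : ℝ) ^ ((m : ℝ) / 2 + 1))⁻¹ ^ 2 * (#(matchedPairs n N m) * D) :=
        abs_variance_empMoment_le hμ hfin hmean hm
    _ ≤ ((N : ℝ) ^ (m + 2))⁻¹ * (K * N ^ (m + 1) * D) := by
        rw [hnorm]
        gcongr
        exact_mod_cast hcard
    _ = _ := by
        push_cast [K]
        field_simp
        ring

theorem stmt19_general (n m : ℕ) (hm : 1 ≤ m) (p : Measure ℝ) [IsProbabilityMeasure p]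
    (hmean : ∫ x, x ∂p = 0)
    (hfin : ∀ k : ℕ, Integrable (fun x => x ^ k) p)
    (μprod : Measure (ℕ → ℝ))
    (hprod : ∀ (s : Finset ℕ) (A : ℕ → Set ℝ), (∀ i, MeasurableSet (A i)) →
      μprod {b | ∀ i ∈ s, b i ∈ A i} = ∏ i ∈ s, p (A i)) :
    Tendsto (fun t : ℕ =>
        (∫ b, (empMoment n (2 ^ (n + 1) * (t + 1)) m b) ^ 2 ∂μprod) -
          (∫ b, empMoment n (2 ^ (n + 1) * (t + 1)) m b ∂μprod) ^ 2)
      atTop (nhds 0) := by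
  have hbound (t : ℕ) := abs_variance_empMoment_le_div (map_restrict_eq_pi hprod) hfin hmean
    (Nat.one_le_iff_ne_zero.mp hm) (n := n) (N := 2 ^ (n + 1) * (t + 1)) (P := 2 * (t + 1))
    (by positivity) (by ring)
  have hN : Tendsto (fun t : ℕ ↦ 2 ^ (n + 1) * (t + 1)) atTop atTop :=
    (tendsto_add_atTop_nat 1).const_mul_atTop' (by positivity)
  exact squeeze_zero_norm hbound ((tendsto_const_div_atTop_nhds_zero_nat _).comp hN)

/-- the variance of the empirical `m`-th moment tends to zero:
`lim_{N→∞} (E[X_{m,n;N}²] - E[X_{m,n;N}]²) = 0` (limit over positive multiples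
`N` of `2^(n+1)`). -/
theorem stmt19 (n m : ℕ) (hm : 1 ≤ m) (p : Measure ℝ) [IsProbabilityMeasure p]
    (hmean : ∫ x, x ∂p = 0) (hvar : ∫ x, x ^ 2 ∂p = 1)
    (hfin : ∀ k : ℕ, Integrable (fun x => x ^ k) p)
    (μprod : Measure (ℕ → ℝ)) [IsProbabilityMeasure μprod]
    (hprod : ∀ (s : Finset ℕ) (A : ℕ → Set ℝ), (∀ i, MeasurableSet (A i)) →
      μprod {b | ∀ i ∈ s, b i ∈ A i} = ∏ i ∈ s, p (A i)) :
    Tendsto (fun t : ℕ =>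
        (∫ b, (empMoment n (2 ^ (n + 1) * (t + 1)) m b) ^ 2 ∂μprod) -
          (∫ b, empMoment n (2 ^ (n + 1) * (t + 1)) m b ∂μprod) ^ 2)
      atTop (nhds 0) :=
  stmt19_general n m hm p hmean hfin μprod hprod
end
end
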